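/- arXiv:2502.11080 — 6 statements merged into one kernel-verified Lean document; each statement's English description precedes it below -/
import Mathlib

section
/- Let Σ be a complete simplicial fan in N_ℝ and φ : N_ℝ → ℝ a function linear on each cone of Σ and strictly convex with respect to Σ. If P = {ρ₁, …, ρ_k} is a primitive collection of Σ with primitive ray generators u_{ρ₁}, …, u_{ρ_k}, then φ(u_{ρ₁} + ⋯ + u_{ρ_k}) > φ(u_{ρ₁}) + ⋯ + φ(u_{ρ_k}). -/
open scoped BigOperators
open scoped Classical

noncomputable section

/-- `N_ℝ ≅ ℝ^n`. -/
abbrev V (n : ℕ) : Type := Fin n → ℝ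

/-- Complexification map `N_ℝ → N_ℂ`. -/
def toC {n : ℕ} (v : V n) : Fin n → ℂ := fun i => (v i : ℂ)

/-- The convex cone generated by a set of vectors (nonnegative combinations). -/
def coneSpan {n : ℕ} (s : Set (V n)) : Set (V n) :=
  {x | ∃ (k : ℕ) (c : Fin k → ℝ) (g : Fin k → V n),
    (∀ i, 0 ≤ c i) ∧ (∀ i, g i ∈ s) ∧ x = ∑ i, c i • g i}

/-- The relative interior of a simplicial cone with generator set `s`
(strictly positive combinations of the generators). -/
def relintCone {n : ℕ} (s : Finset (V n)) : Set (V n) :=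
  {x | ∃ c : V n → ℝ, (∀ v ∈ s, 0 < c v) ∧ x = ∑ v ∈ s, c v • v}

/-- A lattice point of `N = ℤ^n`. -/
def IsIntVec {n : ℕ} (v : V n) : Prop := ∀ i, ∃ z : ℤ, v i = (z : ℝ)

/-- A primitive lattice vector of `N = ℤ^n`. -/
def IsPrimVec {n : ℕ} (v : V n) : Prop :=
  ∃ w : Fin n → ℤ, v = (fun i => (w i : ℝ)) ∧ Finset.univ.gcd w = 1

/-- A rational simplicial fan in `N_ℝ = ℝ^n`: a finite collection of simplicial cones,
each recorded by its finite set of primitive integral generators, closed under faces,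
and such that the intersection of two cones is a common face. -/
structure SimpFan (n : ℕ) where
  gens : Finset (Finset (V n))
  nonemp : gens.Nonempty
  indep : ∀ s ∈ gens, LinearIndependent ℝ (fun v : s => (v : V n))
  prim : ∀ s ∈ gens, ∀ v ∈ s, IsPrimVec v
  faces : ∀ s ∈ gens, ∀ t ⊆ s, t ∈ gens
  inter : ∀ s ∈ gens, ∀ t ∈ gens, ∃ u ∈ gens, u ⊆ s ∧ u ⊆ t ∧
    coneSpan (s : Set (V n)) ∩ coneSpan (t : Set (V n)) = coneSpan (u : Set (V n))

/-- The cones of the fan, as subsets of `N_ℝ`. -/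
def SimpFan.cones {n : ℕ} (F : SimpFan n) : Set (Set (V n)) :=
  (fun s : Finset (V n) => coneSpan (s : Set (V n))) '' F.gens

/-- The support `|Σ|` of the fan. -/
def SimpFan.support {n : ℕ} (F : SimpFan n) : Set (V n) := ⋃ σ ∈ F.cones, σ

/-- Completeness: the support is all of `N_ℝ`. -/
def SimpFan.IsComplete {n : ℕ} (F : SimpFan n) : Prop := F.support = Set.univ

/-- The set of primitive generators of the rays of the fan. -/
def SimpFan.raySet {n : ℕ} (F : SimpFan n) : Set (V n) :=
  {v | ({v} : Finset (V n)) ∈ F.gens ∧ v ≠ 0}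

/-- Two points lie in a common cone of the fan. -/
def InCommonCone {n : ℕ} (F : SimpFan n) (u v : V n) : Prop :=
  ∃ σ ∈ F.cones, u ∈ σ ∧ v ∈ σ

/-- `φ` is piecewise linear with respect to the fan (linear on each cone). -/
def PWLinearWrt {n : ℕ} (F : SimpFan n) (φ : V n → ℝ) : Prop :=
  ∀ σ ∈ F.cones, ∃ l : V n →ₗ[ℝ] ℝ, ∀ x ∈ σ, φ x = l x

/-- `φ` is strictly convex with respect to the fan. -/
def StrictlyConvexWrt {n : ℕ} (F : SimpFan n) (φ : V n → ℝ) : Prop :=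
  ∀ u v : V n, ¬ InCommonCone F u v → φ (u + v) > φ u + φ v

/-- `φ` takes integer values on lattice points (support function of a Cartier divisor). -/
def IsZOnLattice {n : ℕ} (φ : V n → ℝ) : Prop :=
  ∀ w : Fin n → ℤ, ∃ z : ℤ, φ (fun i => (w i : ℝ)) = (z : ℝ)

/-- Ampleness for the support function of a torus-invariant ℝ-Cartier divisor:
it is a positive ℝ-linear combination of support functions of ample Cartier
divisors (i.e. integral, piecewise linear, strictly convex ones). -/
def IsAmpleSF {n : ℕ} (F : SimpFan n) (φ : V n → ℝ) : Prop :=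
  ∃ (k : ℕ) (d : Fin k → ℝ) (ψ : Fin k → (V n → ℝ)),
    (∀ i, 0 < d i) ∧ (∀ i, PWLinearWrt F (ψ i)) ∧ (∀ i, StrictlyConvexWrt F (ψ i)) ∧
    (∀ i, IsZOnLattice (ψ i)) ∧ φ = fun x => ∑ i, d i * ψ i x

/-- A primitive collection of the simplicial fan `F`: a set of (primitive generators of)
rays of `F` not contained in the ray set of any single cone, every proper subset of which
is contained in the ray set of some cone. -/
def IsPrimitiveCollection {n : ℕ} (F : SimpFan n) (P : Finset (V n)) : Prop :=
  (∀ v ∈ P, v ∈ F.raySet) ∧ (¬ ∃ s ∈ F.gens, P ⊆ s) ∧ (∀ Q ⊂ P, ∃ s ∈ F.gens, Q ⊆ s)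


lemma sum_mem_coneSpan {n : ℕ} (s : Finset (V n)) (c : V n → ℝ) (hc : ∀ v ∈ s, 0 ≤ c v) :
    (∑ v ∈ s, c v • v) ∈ coneSpan (s : Set (V n)) := by
  refine ⟨s.card, fun i => c (s.equivFin.symm i : V n), fun i => (s.equivFin.symm i : V n),
    fun i => hc _ (s.equivFin.symm i).2, fun i => (s.equivFin.symm i).2, ?_⟩
  rw [← Finset.sum_coe_sort s (fun v => c v • v)]
  exact (Equiv.sum_comp s.equivFin.symm (fun x : s => c (x : V n) • (x : V n))).symm

lemma mem_coneSpan_self {n : ℕ} (s : Finset (V n)) {w : V n} (hw : w ∈ s) :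
    w ∈ coneSpan (s : Set (V n)) := by
  have := sum_mem_coneSpan s (fun v => if v = w then 1 else 0)
    (by intro v _; split <;> norm_num)
  simpa [Finset.sum_ite_eq' s w (fun v => (1:ℝ) • v), hw] using this

lemma coneSpan_empty {n : ℕ} {x : V n} (hx : x ∈ coneSpan ((∅ : Finset (V n)) : Set (V n))) :
    x = 0 := by
  obtain ⟨k, c, g, _, hg, rfl⟩ := hx
  haveI : IsEmpty (Fin k) := ⟨fun i => by simpa using hg i⟩
  simp

lemma coneSpan_finset {n : ℕ} (s : Finset (V n)) {x : V n}
    (hx : x ∈ coneSpan (s : Set (V n))) :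
    ∃ c : V n → ℝ, (∀ v, 0 ≤ c v) ∧ x = ∑ v ∈ s, c v • v := by
  obtain ⟨k, c, g, hc, hg, rfl⟩ := hx
  refine ⟨fun v => ∑ i ∈ Finset.univ.filter (g · = v), c i,
    fun v => Finset.sum_nonneg (fun i _ => hc i), ?_⟩
  rw [← Finset.sum_fiberwise_of_maps_to (fun i _ => hg i) (fun i => c i • g i)]
  refine Finset.sum_congr rfl (fun v _ => ?_)
  rw [Finset.sum_smul]
  refine Finset.sum_congr rfl (fun i hi => ?_)
  rw [(Finset.mem_filter.mp hi).2]

/-- A ray generator lying in a cone of the fan is one of that cone's generators. -/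
lemma ray_mem_gens {n : ℕ} (F : SimpFan n) {t : Finset (V n)} (ht : t ∈ F.gens)
    {w : V n} (hw : w ∈ F.raySet) (hwt : w ∈ coneSpan (t : Set (V n))) : w ∈ t := by
  obtain ⟨u, hu, hu1, hu2, hu3⟩ := F.inter {w} hw.1 t ht
  have hwu : w ∈ coneSpan (u : Set (V n)) := by
    rw [← hu3]; exact ⟨mem_coneSpan_self _ (Finset.mem_singleton_self w), hwt⟩
  rcases Finset.subset_singleton_iff.mp hu1 with rfl | rfl
  · exact absurd (coneSpan_empty hwu) hw.2
  · exact hu2 (Finset.mem_singleton_self w)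

/-- If the sum of the generators of a cone of the fan lies in another cone of the fan,
then all the generators lie among that cone's generators. -/
lemma gens_subset_of_sum_mem {n : ℕ} (F : SimpFan n) {Q t : Finset (V n)}
    (hQ : Q ∈ F.gens) (ht : t ∈ F.gens)
    (hsum : (∑ w ∈ Q, w) ∈ coneSpan (t : Set (V n))) : Q ⊆ t := by
  obtain ⟨u, hu, huQ, hut, hu3⟩ := F.inter Q hQ t ht
  have hmemQ : (∑ w ∈ Q, w) ∈ coneSpan (Q : Set (V n)) := by
    have := sum_mem_coneSpan Q (fun _ => 1) (fun _ _ => zero_le_one)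
    simpa using this
  have hmemu : (∑ w ∈ Q, w) ∈ coneSpan (u : Set (V n)) := by
    rw [← hu3]; exact ⟨hmemQ, hsum⟩
  obtain ⟨c, hc, hcsum⟩ := coneSpan_finset u hmemu
  -- rewrite the u-combination as a Q-combination
  have hQu : Q ⊆ u := by
    intro w hw
    by_contra hwu
    -- linear independence of Q
    have hzero : ∑ v ∈ Q, ((if v ∈ u then c v else 0) - 1) • v = 0 := by
      have : ∑ v ∈ Q, (if v ∈ u then c v else 0) • v = ∑ v ∈ u, c v • v := by
        simp only [ite_smul, zero_smul]
        rw [Finset.sum_ite_mem, Finset.inter_eq_right.mpr huQ]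
      simp only [sub_smul, Finset.sum_sub_distrib, this, one_smul, ← hcsum]
      simp
    have hli := linearIndependent_iff'.mp (F.indep Q hQ) Finset.univ
      (fun v => (if (v : V n) ∈ u then c v else 0) - 1) ?_ ⟨w, hw⟩ (Finset.mem_univ _)
    · simp only [hwu, if_false] at hli
      norm_num at hli
    · rw [← hzero, ← Finset.sum_coe_sort Q (fun v => ((if v ∈ u then c v else 0) - 1) • v)]
  exact hQu.trans hut

/-- a function linear on each cone of a complete simplicial fan and
strictly convex with respect to it is strictly superadditive on every primitive
collection: `φ(u_{ρ₁} + ⋯ + u_{ρ_k}) > φ(u_{ρ₁}) + ⋯ + φ(u_{ρ_k})`. -/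
theorem stmt2 {n : ℕ} (F : SimpFan n) (hcomp : F.IsComplete) (φ : V n → ℝ)
    (hpl : PWLinearWrt F φ) (hsc : StrictlyConvexWrt F φ)
    (P : Finset (V n)) (hP : IsPrimitiveCollection F P) :
    φ (∑ v ∈ P, v) > ∑ v ∈ P, φ v := by
  obtain ⟨hray, hnot, hprop⟩ := hP
  have hemp : (∅ : Finset (V n)) ∈ F.gens := by
    obtain ⟨s, hs⟩ := F.nonemp
    exact F.faces s hs ∅ (Finset.empty_subset s)
  have hPne : P.Nonempty := by
    rcases P.eq_empty_or_nonempty with rfl | h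
    · exact absurd ⟨∅, hemp, subset_rfl⟩ hnot
    · exact h
  obtain ⟨v, hv⟩ := hPne
  set Q := P.erase v with hQdef
  have hQP : Q ⊂ P := Finset.erase_ssubset hv
  obtain ⟨s', hs', hQs'⟩ := hprop Q hQP
  have hQ : Q ∈ F.gens := F.faces s' hs' Q hQs'
  set y := ∑ w ∈ Q, w with hy
  have hnc : ¬ InCommonCone F v y := by
    rintro ⟨σ, ⟨t, ht, rfl⟩, hvσ, hyσ⟩
    have hvt : v ∈ t := ray_mem_gens F ht (hray v hv) hvσ
    have hQt : Q ⊆ t := gens_subset_of_sum_mem F hQ ht hyσ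
    refine hnot ⟨t, ht, fun x hx => ?_⟩
    rcases eq_or_ne x v with rfl | hne
    · exact hvt
    · exact hQt (Finset.mem_erase.mpr ⟨hne, hx⟩)
  have hφy : φ y = ∑ w ∈ Q, φ w := by
    obtain ⟨l, hl⟩ := hpl (coneSpan (Q : Set (V n))) ⟨Q, hQ, rfl⟩
    have hyQ : y ∈ coneSpan (Q : Set (V n)) := by
      simpa using sum_mem_coneSpan Q (fun _ => 1) (fun _ _ => zero_le_one)
    rw [hl y hyQ, hy, map_sum]
    exact Finset.sum_congr rfl (fun w hw => (hl w (mem_coneSpan_self Q hw)).symm)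
  have hsum : ∑ w ∈ P, w = v + y := (Finset.add_sum_erase P _ hv).symm
  have hsumφ : ∑ w ∈ P, φ w = φ v + ∑ w ∈ Q, φ w := (Finset.add_sum_erase P φ hv).symm
  rw [hsum, hsumφ, ← hφy]
  exact hsc v y hnc
end
end

section
/- Let Σ be a complete fan in N_ℝ ≅ ℝ^n, let W ⊆ N_ℂ be a complex linear subspace with W ∩ N_ℝ ≠ N_ℝ but containing at least one ray of Σ, let W' be the ℚ-span of the primitive generators of rays of Σ contained in W, and let S = {ρ ∈ Σ(1) : ρ ⊄ W}. Suppose φ : N_ℝ → ℝ is a non-positive function, strictly convex with respect to Σ, linear on each cone of Σ, with φ(v_ρ) = 0 for all ρ ∈ S. Then there exist positive rationals a_ρ for ρ ∈ S such that v₀ := Σ_{ρ ∈ S} a_ρ v_ρ is a nonzero element of W' ∩ N_ℚ, all v_ρ (ρ ∈ S) lie in a common maximal cone of Σ, and the ray spanned by v₀ is not in Σ(1). -/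
open scoped BigOperators
open scoped Classical

noncomputable section

namespace Stmt3Aux

variable {n : ℕ}

lemma coneSpan_mono {s t : Set (V n)} (h : s ⊆ t) : coneSpan s ⊆ coneSpan t := by
  rintro x ⟨k, c, g, hc, hg, rfl⟩
  exact ⟨k, c, g, hc, fun i => h (hg i), rfl⟩

lemma coeffs_mem_coneSpan (s : Finset (V n)) (c : V n → ℝ) (hc : ∀ v ∈ s, 0 ≤ c v) :
    (∑ v ∈ s, c v • v) ∈ coneSpan (s : Set (V n)) := by
  refine ⟨s.card, fun i => c (s.equivFin.symm i), fun i => (s.equivFin.symm i : V n),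
    fun i => hc _ (s.equivFin.symm i).2, fun i => (s.equivFin.symm i).2, ?_⟩
  rw [← Finset.sum_attach s (fun v => c v • v)]
  exact (Equiv.sum_comp s.equivFin.symm (fun v : s => c (v : V n) • (v : V n))).symm

lemma mem_coneSpan_iff {s : Finset (V n)} {x : V n} :
    x ∈ coneSpan (s : Set (V n)) ↔
      ∃ c : V n → ℝ, (∀ v ∈ s, 0 ≤ c v) ∧ x = ∑ v ∈ s, c v • v := by
  constructor
  · rintro ⟨k, c, g, hc, hg, rfl⟩
    refine ⟨fun v => ∑ i ∈ Finset.univ.filter (fun i => g i = v), c i,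
      fun v _ => Finset.sum_nonneg fun i _ => hc i, ?_⟩
    rw [← Finset.sum_fiberwise_of_maps_to (fun i _ => hg i) (fun i => c i • g i)]
    refine Finset.sum_congr rfl fun v _ => ?_
    rw [Finset.sum_smul]
    refine Finset.sum_congr rfl fun i hi => ?_
    rw [(Finset.mem_filter.mp hi).2]
  · rintro ⟨c, hc, rfl⟩; exact coeffs_mem_coneSpan s c hc

lemma zero_mem_coneSpan (s : Finset (V n)) : (0 : V n) ∈ coneSpan (s : Set (V n)) := by
  rw [mem_coneSpan_iff]
  exact ⟨0, fun v _ => le_refl _, by simp⟩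

lemma add_mem_coneSpan {s : Finset (V n)} {x y : V n}
    (hx : x ∈ coneSpan (s : Set (V n))) (hy : y ∈ coneSpan (s : Set (V n))) :
    x + y ∈ coneSpan (s : Set (V n)) := by
  rw [mem_coneSpan_iff] at hx hy ⊢
  obtain ⟨c, hc, rfl⟩ := hx
  obtain ⟨d, hd, rfl⟩ := hy
  exact ⟨c + d, fun v hv => add_nonneg (hc v hv) (hd v hv), by
    rw [← Finset.sum_add_distrib]; exact Finset.sum_congr rfl fun v _ => (add_smul _ _ _).symm⟩

lemma smul_mem_coneSpan {s : Finset (V n)} {x : V n} {a : ℝ} (ha : 0 ≤ a)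
    (hx : x ∈ coneSpan (s : Set (V n))) : a • x ∈ coneSpan (s : Set (V n)) := by
  rw [mem_coneSpan_iff] at hx ⊢
  obtain ⟨c, hc, rfl⟩ := hx
  refine ⟨fun v => a * c v, fun v hv => mul_nonneg ha (hc v hv), ?_⟩
  rw [Finset.smul_sum]
  exact Finset.sum_congr rfl fun v _ => (smul_smul _ _ _)

lemma coneSpan_subset_span (s : Finset (V n)) :
    coneSpan (s : Set (V n)) ⊆ (Submodule.span ℝ (s : Set (V n)) : Set (V n)) := by
  intro x hx
  rw [mem_coneSpan_iff] at hx
  obtain ⟨c, _, rfl⟩ := hx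
  exact Submodule.sum_mem _ fun v hv =>
    Submodule.smul_mem _ _ (Submodule.subset_span (by exact_mod_cast hv))

lemma coeffs_unique {s : Finset (V n)} (hli : LinearIndependent ℝ (fun v : s => (v : V n)))
    {c d : V n → ℝ} (h : ∑ v ∈ s, c v • v = ∑ v ∈ s, d v • v) : ∀ v ∈ s, c v = d v := by
  have h0 : ∑ v : s, (c (v : V n) - d (v : V n)) • (v : V n) = 0 := by
    have h1 : ∑ v : s, (c (v : V n)) • (v : V n) = ∑ v : s, (d (v : V n)) • (v : V n) := by
      rw [← Finset.sum_attach s (fun v => c v • v), ← Finset.sum_attach s (fun v => d v • v)] at h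
      simpa using h
    simp only [sub_smul]
    rw [Finset.sum_sub_distrib, h1, sub_self]
  have := Fintype.linearIndependent_iff.mp hli (fun v => c (v : V n) - d (v : V n)) h0
  intro v hv
  have h2 := this ⟨v, hv⟩
  simpa [sub_eq_zero] using h2


lemma primVec_ne_zero {v : V n} (h : IsPrimVec v) : v ≠ 0 := by
  obtain ⟨w, rfl, hg⟩ := h
  intro h0
  have : ∀ i ∈ Finset.univ, w i = 0 := by
    intro i _
    have h1 := congrFun h0 i
    simp only [Pi.zero_apply] at h1
    exact_mod_cast h1
  rw [Finset.gcd_eq_zero_iff.mpr this] at hg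
  exact absurd hg (by norm_num)

variable {F : SimpFan n}

lemma mem_raySet_of_mem_gens {s : Finset (V n)} (hs : s ∈ F.gens) {v : V n} (hv : v ∈ s) :
    v ∈ F.raySet :=
  ⟨F.faces s hs {v} (Finset.singleton_subset_iff.mpr hv),
    primVec_ne_zero (F.prim s hs v hv)⟩

lemma raySet_prim {v : V n} (hv : v ∈ F.raySet) : IsPrimVec v :=
  F.prim {v} hv.1 v (Finset.mem_singleton_self v)

lemma raySet_finite : F.raySet.Finite := by
  have : F.raySet ⊆ ⋃ s ∈ (F.gens : Set (Finset (V n))), (s : Set (V n)) := by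
    intro v hv
    exact Set.mem_biUnion hv.1 (Finset.mem_singleton_self v)
  exact Set.Finite.subset (Set.Finite.biUnion F.gens.finite_toSet fun s _ => s.finite_toSet) this

lemma exists_cone (hcomp : F.IsComplete) (x : V n) :
    ∃ s ∈ F.gens, x ∈ coneSpan (s : Set (V n)) := by
  have hx : x ∈ F.support := by rw [hcomp]; trivial
  obtain ⟨σ, hσ, hxσ⟩ := Set.mem_iUnion₂.mp hx
  obtain ⟨s, hs, rfl⟩ := hσ
  exact ⟨s, hs, hxσ⟩

lemma phi_lin {φ : V n → ℝ} (hpl : PWLinearWrt F φ) {s : Finset (V n)} (hs : s ∈ F.gens) :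
    ∃ l : V n →ₗ[ℝ] ℝ, ∀ x ∈ coneSpan (s : Set (V n)), φ x = l x :=
  hpl _ ⟨s, hs, rfl⟩

lemma phi_zero {φ : V n → ℝ} (hpl : PWLinearWrt F φ) : φ 0 = 0 := by
  obtain ⟨s, hs⟩ := F.nonemp
  obtain ⟨l, hl⟩ := phi_lin hpl hs
  rw [hl 0 (Stmt3Aux.zero_mem_coneSpan s), map_zero]

/-- two vanishing points of a nonpositive strictly convex PL function lie in a common
cone, and the sum vanishes too. -/
lemma Z_add {φ : V n → ℝ} (hnp : ∀ v, φ v ≤ 0) (hpl : PWLinearWrt F φ)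
    (hsc : StrictlyConvexWrt F φ) {u v : V n} (hu : φ u = 0) (hv : φ v = 0) :
    ∃ s ∈ F.gens, u ∈ coneSpan (s : Set (V n)) ∧ v ∈ coneSpan (s : Set (V n)) ∧
      φ (u + v) = 0 := by
  by_cases hcc : InCommonCone F u v
  · obtain ⟨σ, ⟨s, hs, rfl⟩, huσ, hvσ⟩ := hcc
    obtain ⟨l, hl⟩ := phi_lin hpl hs
    refine ⟨s, hs, huσ, hvσ, ?_⟩
    rw [hl _ (add_mem_coneSpan huσ hvσ), map_add, ← hl _ huσ, ← hl _ hvσ, hu, hv, add_zero]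
  · have := hsc u v hcc
    rw [hu, hv, add_zero] at this
    exact absurd (hnp (u + v)) (not_le.mpr this)

lemma Z_smul (hcomp : F.IsComplete) {φ : V n → ℝ} (hpl : PWLinearWrt F φ)
    {u : V n} (hu : φ u = 0) {a : ℝ} (ha : 0 ≤ a) : φ (a • u) = 0 := by
  obtain ⟨s, hs, hus⟩ := exists_cone hcomp u
  obtain ⟨l, hl⟩ := phi_lin hpl hs
  rw [hl _ (smul_mem_coneSpan ha hus), map_smul, ← hl _ hus, hu, smul_eq_mul, mul_zero]

lemma Z_sum (hcomp : F.IsComplete) {φ : V n → ℝ} (hnp : ∀ v, φ v ≤ 0)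
    (hpl : PWLinearWrt F φ) (hsc : StrictlyConvexWrt F φ)
    (T : Finset (V n)) (b : V n → ℝ) (hb : ∀ v ∈ T, 0 ≤ b v)
    (hT : ∀ v ∈ T, φ v = 0) : φ (∑ v ∈ T, b v • v) = 0 := by
  classical
  induction T using Finset.induction_on with
  | empty => simpa using phi_zero hpl
  | @insert a T' hx ih =>
    rw [Finset.sum_insert hx]
    have h1 : φ (b a • a) = 0 :=
      Z_smul hcomp hpl (hT a (Finset.mem_insert_self a T')) (hb a (Finset.mem_insert_self a T'))
    have h2 : φ (∑ v ∈ T', b v • v) = 0 :=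
      ih (fun v hv => hb v (Finset.mem_insert_of_mem hv))
        (fun v hv => hT v (Finset.mem_insert_of_mem hv))
    obtain ⟨s, _, _, _, h⟩ := Z_add hnp hpl hsc h1 h2
    exact h

/-- Key lemma: if `x` is in the relative interior of a cone `s` of the fan and in
another cone `t`, then `s ⊆ t`. -/
lemma relint_subset {s t : Finset (V n)} (hs : s ∈ F.gens) (ht : t ∈ F.gens)
    {x : V n} (hx : x ∈ relintCone s) (hxt : x ∈ coneSpan (t : Set (V n))) : s ⊆ t := by
  obtain ⟨c, hc, hxc⟩ := hx
  have hxs : x ∈ coneSpan (s : Set (V n)) := by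
    rw [mem_coneSpan_iff]
    exact ⟨c, fun v hv => (hc v hv).le, hxc⟩
  obtain ⟨u, hu, hus, hut, heq⟩ := F.inter s hs t ht
  have hxu : x ∈ coneSpan (u : Set (V n)) := heq ▸ ⟨hxs, hxt⟩
  rw [mem_coneSpan_iff] at hxu
  obtain ⟨d, hd, hxd⟩ := hxu
  have hxd' : x = ∑ v ∈ s, (if v ∈ u then d v else 0) • v := by
    rw [hxd, ← Finset.sum_subset hus (fun v _ hvu => by simp [hvu])]
    exact Finset.sum_congr rfl fun v hv => by simp [hv]
  have huniq := coeffs_unique (F.indep s hs) (hxc.symm.trans hxd')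
  intro v hv
  by_contra hvt
  have hvu : v ∉ u := fun h => hvt (hut h)
  have := huniq v hv
  simp only [hvu, if_false] at this
  exact absurd this (ne_of_gt (hc v hv))

lemma exists_relint {s : Finset (V n)} (hs : s ∈ F.gens) {x : V n}
    (hx : x ∈ coneSpan (s : Set (V n))) :
    ∃ s' ∈ F.gens, s' ⊆ s ∧ x ∈ relintCone s' := by
  rw [mem_coneSpan_iff] at hx
  obtain ⟨c, hc, rfl⟩ := hx
  classical
  refine ⟨s.filter (fun v => 0 < c v), F.faces s hs _ (Finset.filter_subset _ _),
    Finset.filter_subset _ _, c, fun v hv => (Finset.mem_filter.mp hv).2, ?_⟩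
  refine (Finset.sum_filter_of_ne ?_).symm
  intro v hv hne
  rcases (hc v hv).lt_or_eq with h | h
  · exact h
  · exact absurd (by rw [← h, zero_smul]) hne


lemma card_le_n {s : Finset (V n)} (hs : s ∈ F.gens) : s.card ≤ n := by
  have h := (F.indep s hs).fintype_card_le_finrank
  rw [Fintype.card_coe] at h
  simpa [Module.finrank_pi] using h

lemma exists_basis_cone {t : Finset (V n)} (ht : t ∈ F.gens) (hcard : t.card = n)
    (hn : 0 < n) :
    ∃ b : Module.Basis t ℝ (V n), (∀ v : t, b v = (v : V n)) ∧
      ∀ x : V n, x ∈ coneSpan (t : Set (V n)) ↔ ∀ v : t, 0 ≤ b.repr x v := by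
  have hne : Nonempty t := Finset.nonempty_coe_sort.mpr (Finset.card_pos.mp (by omega))
  have hcard' : Fintype.card t = Module.finrank ℝ (V n) := by
    rw [Fintype.card_coe, hcard, Module.finrank_pi]
    simp
  set b := basisOfLinearIndependentOfCardEqFinrank (F.indep t ht) hcard' with hb
  have hbv : ∀ v : t, b v = (v : V n) := fun v => by
    rw [hb, coe_basisOfLinearIndependentOfCardEqFinrank]
  refine ⟨b, hbv, fun x => ⟨?_, ?_⟩⟩
  · intro hx v
    rw [mem_coneSpan_iff] at hx
    obtain ⟨c, hc, rfl⟩ := hx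
    have hrw : (∑ w ∈ t, c w • w) = ∑ w : t, c (w : V n) • b w := by
      rw [← Finset.sum_attach t (fun w => c w • w)]
      exact Finset.sum_congr rfl fun w _ => by rw [hbv]
    rw [hrw, b.repr_sum_self]
    exact hc _ v.2
  · intro hx
    rw [mem_coneSpan_iff]
    classical
    refine ⟨fun w => if h : w ∈ t then b.repr x ⟨w, h⟩ else 0, ?_, ?_⟩
    · intro w hw
      simp only [dif_pos hw]
      exact hx ⟨w, hw⟩
    · have : ∑ w ∈ t, (if h : w ∈ t then b.repr x ⟨w, h⟩ else 0) • w
          = ∑ w : t, b.repr x w • b w := by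
        rw [← Finset.sum_attach t (fun w => (if h : w ∈ t then b.repr x ⟨w, h⟩ else 0) • w)]
        refine Finset.sum_congr rfl fun w _ => ?_
        rw [dif_pos w.2, hbv]
      rw [this, b.sum_repr]

/-- In a complete fan, the relative interior point of a cone shows the cone is a face of
some full-dimensional cone. -/
lemma exists_maximal_cone (hcomp : F.IsComplete) (hn : 0 < n) {s₀ : Finset (V n)}
    (hs₀ : s₀ ∈ F.gens) {x : V n} (hx : x ∈ relintCone s₀) :
    ∃ t ∈ F.gens, t.card = n ∧ s₀ ⊆ t := by
  classical
  -- a direction avoiding all spans of lower-dimensional cones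
  have hd : ∃ d : V n, ∀ s ∈ F.gens, s.card < n → d ∉ Submodule.span ℝ (s : Set (V n)) := by
    by_contra hcon
    push_neg at hcon
    have hfr : Module.finrank ℝ (V n) = n := by rw [Module.finrank_pi]; simp
    set p : {s // s ∈ F.gens} → Subspace ℝ (V n) := fun s =>
      if s.1.card < n then Submodule.span ℝ (s.1 : Set (V n)) else ⊥ with hp
    have hcover : ⋃ i, (p i : Set (V n)) = Set.univ := by
      rw [Set.eq_univ_iff_forall]
      intro d
      obtain ⟨s, hs, hlt, hmem⟩ := hcon d
      refine Set.mem_iUnion.mpr ⟨⟨s, hs⟩, ?_⟩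
      rw [hp]
      simp only [hlt, if_true]
      exact hmem
    obtain ⟨i, hi⟩ := Subspace.exists_eq_top_of_iUnion_eq_univ hcover
    rw [hp] at hi
    by_cases hc : i.1.card < n
    · simp only [hc, if_true] at hi
      have h1 : Module.finrank ℝ (Submodule.span ℝ (i.1 : Set (V n))) ≤ i.1.card :=
        finrank_span_finset_le_card i.1
      rw [hi, finrank_top] at h1
      omega
    · simp only [hc, if_false] at hi
      have : Nontrivial (V n) := by
        have : 0 < Module.finrank ℝ (V n) := by omega
        exact Module.nontrivial_of_finrank_pos this
      exact absurd hi bot_ne_top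
  obtain ⟨d, hd⟩ := hd
  -- main claim: x lies in some full-dimensional cone
  have hmain : ∃ t ∈ F.gens, t.card = n ∧ x ∈ coneSpan (t : Set (V n)) := by
    by_contra hcon
    push_neg at hcon
    -- for each full-dimensional cone, a small perturbation along d stays outside
    have hsmall : ∀ t : Finset (V n), ∃ δ : ℝ, 0 < δ ∧
        (t ∈ F.gens → t.card = n → ∀ ε : ℝ, 0 < ε → ε < δ →
          x + ε • d ∉ coneSpan (t : Set (V n))) := by
      intro t
      by_cases htg : t ∈ F.gens
      · by_cases htc : t.card = n
        · obtain ⟨b, hbv, hbmem⟩ := exists_basis_cone htg htc hn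
          have hxt : x ∉ coneSpan (t : Set (V n)) := hcon t htg htc
          have : ∃ v : t, b.repr x v < 0 := by
            by_contra hno
            push_neg at hno
            exact hxt ((hbmem x).mpr hno)
          obtain ⟨v, hv⟩ := this
          refine ⟨(-(b.repr x v)) / (|b.repr d v| + 1), div_pos (by linarith) (by positivity), ?_⟩
          intro _ _ ε hε hεδ hmem
          have h1 := ((hbmem _).mp hmem) v
          rw [map_add, map_smul] at h1
          simp only [Finsupp.coe_add, Finsupp.coe_smul, Pi.add_apply, Pi.smul_apply,
            smul_eq_mul] at h1
          have h3 : ε * b.repr d v ≤ ε * (|b.repr d v| + 1) := by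
            have := le_abs_self (b.repr d v)
            nlinarith
          have h4 : ε * (|b.repr d v| + 1) < -(b.repr x v) :=
            (lt_div_iff₀ (by positivity)).mp hεδ
          linarith
        · exact ⟨1, one_pos, fun _ h => absurd h htc⟩
      · exact ⟨1, one_pos, fun h => absurd h htg⟩
    choose δf hδf using hsmall
    set δ : ℝ := (F.gens.image δf).min' (F.nonemp.image δf) with hδdef
    have hδpos : 0 < δ := by
      obtain ⟨t, _, hteq⟩ := Finset.mem_image.mp ((F.gens.image δf).min'_mem (F.nonemp.image δf))
      rw [hδdef, ← hteq]
      exact (hδf t).1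
    have hδle : ∀ t ∈ F.gens, δ ≤ δf t := fun t htg =>
      Finset.min'_le _ _ (Finset.mem_image_of_mem δf htg)
    -- the finitely many bad parameters hitting low-dimensional cones
    set B : Set ℝ := ⋃ s ∈ (F.gens : Set (Finset (V n))),
      {ε : ℝ | s.card < n ∧ x + ε • d ∈ Submodule.span ℝ (s : Set (V n))} with hB
    have hBfin : B.Finite := by
      refine Set.Finite.biUnion F.gens.finite_toSet (fun s hs => Set.Subsingleton.finite ?_)
      intro ε₁ h1 ε₂ h2
      by_contra hne
      have hmem : (ε₁ - ε₂) • d ∈ Submodule.span ℝ (s : Set (V n)) := by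
        have hsub := Submodule.sub_mem _ h1.2 h2.2
        have : (x + ε₁ • d) - (x + ε₂ • d) = (ε₁ - ε₂) • d := by
          rw [sub_smul]; abel
        rwa [this] at hsub
      have hdmem : d ∈ Submodule.span ℝ (s : Set (V n)) := by
        have := Submodule.smul_mem _ (ε₁ - ε₂)⁻¹ hmem
        rwa [smul_smul, inv_mul_cancel₀ (sub_ne_zero.mpr hne), one_smul] at this
      exact hd s hs h1.1 hdmem
    obtain ⟨ε, hεmem⟩ := ((Set.Ioo_infinite hδpos).diff hBfin).nonempty
    obtain ⟨hεI, hεB⟩ := hεmem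
    obtain ⟨s, hsg, hmem⟩ := exists_cone hcomp (x + ε • d)
    rcases lt_or_eq_of_le (card_le_n hsg) with hlt | heq
    · exact hεB (Set.mem_biUnion hsg ⟨hlt, coneSpan_subset_span s hmem⟩)
    · exact (hδf s).2 hsg heq ε hεI.1 (lt_of_lt_of_le hεI.2 (hδle s hsg)) hmem
  obtain ⟨t, htg, htc, hxt⟩ := hmain
  exact ⟨t, htg, htc, relint_subset hs₀ htg hx hxt⟩


/-- `toC` as an `ℝ`-linear map. -/
def toCL : V n →ₗ[ℝ] (Fin n → ℂ) where
  toFun := toC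
  map_add' u v := by
    funext i
    simp [toC]
  map_smul' c v := by
    funext i
    simp [toC, Complex.real_smul]

lemma toC_mem_span {W : Submodule ℂ (Fin n → ℂ)} {A : Set (V n)}
    (hA : ∀ v ∈ A, toC v ∈ W) {x : V n} (hx : x ∈ Submodule.span ℝ A) : toC x ∈ W := by
  have h1 : toCL (n := n) x ∈ Submodule.map (toCL (n := n)) (Submodule.span ℝ A) :=
    Submodule.mem_map_of_mem hx
  rw [Submodule.map_span] at h1
  have h2 : Submodule.span ℝ (toCL (n := n) '' A) ≤ W.restrictScalars ℝ := by
    rw [Submodule.span_le]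
    rintro _ ⟨v, hv, rfl⟩
    exact hA v hv
  exact h2 h1

lemma real_smul_mem {W : Submodule ℂ (Fin n → ℂ)} {z : Fin n → ℂ} (hz : z ∈ W) (r : ℝ) :
    r • z ∈ W := by
  have h : r • z = (r : ℂ) • z := by
    funext i
    simp [Complex.real_smul]
  rw [h]
  exact W.smul_mem _ hz

lemma rat_coeffs {s : Finset (V n)} (hli : LinearIndependent ℝ (fun v : s => (v : V n)))
    (vQ : s → (Fin n → ℚ)) (hvQ : ∀ v : s, ∀ i, (v : V n) i = (vQ v i : ℝ))
    (yQ : Fin n → ℚ) {y : V n} (hyQ : ∀ i, y i = (yQ i : ℝ))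
    {c : V n → ℝ} (hc : y = ∑ v ∈ s, c v • v) : ∀ v ∈ s, ∃ q : ℚ, c v = (q : ℝ) := by
  classical
  have hliQ : LinearIndependent ℚ vQ := by
    rw [Fintype.linearIndependent_iff]
    intro g hg
    have hreal : ∑ v : s, (g v : ℝ) • (v : V n) = 0 := by
      funext i
      rw [Finset.sum_apply]
      have h0 : ((∑ v : s, g v • vQ v) i : ℚ) = 0 := by rw [hg]; rfl
      rw [Finset.sum_apply] at h0
      have : ∑ v : s, (g v : ℝ) * ((vQ v i : ℚ) : ℝ) = 0 := by
        exact_mod_cast congrArg (fun q : ℚ => (q : ℝ)) h0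
      simp only [Pi.smul_apply, smul_eq_mul, Pi.zero_apply]
      rw [← this]
      exact Finset.sum_congr rfl fun v _ => by rw [hvQ v i]
    intro v
    exact_mod_cast Fintype.linearIndependent_iff.mp hli _ hreal v
  set f : Submodule.span ℚ (Set.range vQ) →ₗ[ℚ] (s → ℚ) :=
    (Finsupp.linearEquivFunOnFinite ℚ ℚ s).toLinearMap.comp hliQ.repr with hf
  obtain ⟨g, hg⟩ := LinearMap.exists_extend f
  have hgv : ∀ v : s, g (vQ v) = Pi.single v 1 := by
    intro v
    have hmem : vQ v ∈ Submodule.span ℚ (Set.range vQ) :=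
      Submodule.subset_span (Set.mem_range_self v)
    have h1 : g (vQ v) = f ⟨vQ v, hmem⟩ := by
      rw [← hg]; rfl
    rw [h1, hf]
    simp only [LinearMap.coe_comp, LinearEquiv.coe_coe, Function.comp_apply]
    rw [hliQ.repr_eq_single v ⟨vQ v, hmem⟩ rfl]
    exact Finsupp.linearEquivFunOnFinite_single ℚ ℚ _ v 1
  intro v hv
  refine ⟨g yQ ⟨v, hv⟩, ?_⟩
  set D : Fin n → ℚ := fun m => g (fun j => if m = j then 1 else 0) ⟨v, hv⟩ with hD
  have hpi : ∀ z : Fin n → ℚ, g z ⟨v, hv⟩ = ∑ m, z m * D m := by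
    intro z
    rw [LinearMap.pi_apply_eq_sum_univ g z]
    rw [Finset.sum_apply]
    exact Finset.sum_congr rfl fun m _ => by simp [hD, smul_eq_mul]
  -- evaluate the real linear functional z ↦ ∑ m, z m * D m  on both sides of hc
  have hstep : ∑ m, y m * (D m : ℝ) = ∑ w ∈ s, c w * (∑ m, w m * (D m : ℝ)) := by
    rw [hc]
    simp only [Finset.sum_apply, Pi.smul_apply, smul_eq_mul, Finset.sum_mul]
    rw [Finset.sum_comm]
    exact Finset.sum_congr rfl fun w _ => by
      rw [Finset.mul_sum]
      exact Finset.sum_congr rfl fun m _ => by ring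
  have hite : ∀ w ∈ s, (∑ m, w m * (D m : ℝ)) = (if w = v then (1:ℝ) else 0) := by
    intro w hws
    have h1 : ∑ m, w m * (D m : ℝ) = ((∑ m, vQ ⟨w, hws⟩ m * D m : ℚ) : ℝ) := by
      push_cast
      exact Finset.sum_congr rfl fun m _ => congrArg (fun r => r * ((D m : ℚ) : ℝ)) (hvQ ⟨w, hws⟩ m)
    rw [h1, ← hpi (vQ ⟨w, hws⟩), hgv ⟨w, hws⟩]
    by_cases hwv : w = v
    · subst hwv
      simp
    · have hne : (⟨v, hv⟩ : s) ≠ ⟨w, hws⟩ := fun e => hwv (Subtype.ext_iff.mp e).symm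
      simp [Pi.single_apply, hne, hwv]
  have hy' : ∑ m, y m * (D m : ℝ) = ((g yQ ⟨v, hv⟩ : ℚ) : ℝ) := by
    rw [hpi yQ]
    push_cast
    exact Finset.sum_congr rfl fun m _ => by rw [hyQ m]
  have hfinal : ∑ w ∈ s, c w * (∑ m, w m * (D m : ℝ)) = c v := by
    rw [Finset.sum_congr rfl (fun w hws => by rw [hite w hws])]
    rw [Finset.sum_eq_single_of_mem v hv (fun w _ hwv => by simp [hwv])]
    simp
  rw [← hfinal, ← hstep, hy']

lemma prim_eq_of_smul {v w : V n} (hv : IsPrimVec v) (hw : IsPrimVec w) {l : ℝ} (hl : 0 < l)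
    (h : v = l • w) : v = w := by
  obtain ⟨a, rfl, ha⟩ := hv
  obtain ⟨b, rfl, hb⟩ := hw
  have happ : ∀ j, (a j : ℝ) = l * (b j : ℝ) := by
    intro j
    have := congrFun h j
    simpa [Pi.smul_apply, smul_eq_mul] using this
  have hbne : ∃ i, b i ≠ 0 := by
    by_contra hno
    push_neg at hno
    rw [Finset.gcd_eq_zero_iff.mpr (fun i _ => hno i)] at hb
    exact absurd hb (by norm_num)
  obtain ⟨i, hi⟩ := hbne
  have hmul : ∀ j, b i * a j = a i * b j := by
    intro j
    have : (b i : ℝ) * (a j : ℝ) = (a i : ℝ) * (b j : ℝ) := by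
      rw [happ j, happ i]; ring
    exact_mod_cast this
  have hgcd : normalize (b i) * Finset.univ.gcd a = normalize (a i) * Finset.univ.gcd b := by
    rw [← Finset.gcd_mul_left, ← Finset.gcd_mul_left]
    exact Finset.gcd_congr rfl (fun j _ => hmul j)
  rw [ha, hb, mul_one, mul_one, ← Int.abs_eq_normalize, ← Int.abs_eq_normalize] at hgcd
  have habs : a i = b i ∨ a i = -(b i) := abs_eq_abs.mp hgcd.symm
  have haibi : a i = b i := by
    rcases habs with h1 | h1
    · exact h1
    · exfalso
      have : (a i : ℝ) = -(b i : ℝ) := by exact_mod_cast congrArg (fun z : ℤ => (z : ℝ)) h1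
      rw [happ i] at this
      have hbir : (b i : ℝ) ≠ 0 := by exact_mod_cast hi
      have h5 : (l + 1) * (b i : ℝ) = 0 := by linarith
      rcases mul_eq_zero.mp h5 with h6 | h6
      · linarith
      · exact hbir h6
  have hl1 : l = 1 := by
    have h2 := happ i
    rw [haibi] at h2
    have hbir : (b i : ℝ) ≠ 0 := by exact_mod_cast hi
    have : (b i : ℝ) * (l - 1) = 0 := by linarith
    rcases mul_eq_zero.mp this with h3 | h3
    · exact absurd h3 hbir
    · linarith
  rw [h, hl1, one_smul]

end Stmt3Aux

/-- let `Σ` be a complete (simplicial) fan, `W ⊆ N_ℂ` a complex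
subspace with `W ∩ N_ℝ ≠ N_ℝ` containing at least one ray of `Σ`, and
`S = {ρ ∈ Σ(1) : ρ ⊄ W}`. If `φ ≤ 0` is strictly convex with respect to `Σ`, linear on
each cone, and vanishes on the generators `v_ρ`, `ρ ∈ S`, then there are positive
rationals `a_ρ` (`ρ ∈ S`) such that `v₀ = Σ_{ρ∈S} a_ρ v_ρ` is a nonzero rational point of
`W' = Span_ℚ{v_ρ : ρ ⊆ W}`, all `v_ρ` (`ρ ∈ S`) lie in a common maximal cone of `Σ`, and
the ray spanned by `v₀` is not a ray of `Σ`. -/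
theorem stmt3 {n : ℕ} (F : SimpFan n) (hcomp : F.IsComplete)
    (W : Submodule ℂ (Fin n → ℂ))
    (hWne : ∃ v : V n, toC v ∉ W) (hWray : ∃ v ∈ F.raySet, toC v ∈ W)
    (φ : V n → ℝ) (hnp : ∀ v, φ v ≤ 0) (hpl : PWLinearWrt F φ)
    (hsc : StrictlyConvexWrt F φ)
    (hzero : ∀ v ∈ F.raySet, toC v ∉ W → φ v = 0) :
    ∃ a : V n → ℚ, (∀ v ∈ {v | v ∈ F.raySet ∧ toC v ∉ W}, 0 < a v) ∧
      (∑ᶠ v ∈ {v | v ∈ F.raySet ∧ toC v ∉ W}, (a v : ℝ) • v) ≠ 0 ∧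
      (∀ i, ∃ q : ℚ, (∑ᶠ v ∈ {v | v ∈ F.raySet ∧ toC v ∉ W}, (a v : ℝ) • v) i = (q : ℝ)) ∧
      (∑ᶠ v ∈ {v | v ∈ F.raySet ∧ toC v ∉ W}, (a v : ℝ) • v) ∈
        Submodule.span ℝ {v : V n | v ∈ F.raySet ∧ toC v ∈ W} ∧
      (∃ s ∈ F.gens, s.card = n ∧
        ∀ v ∈ {v | v ∈ F.raySet ∧ toC v ∉ W}, v ∈ coneSpan (s : Set (V n))) ∧
      ¬ ∃ w ∈ F.raySet, ∃ c : ℝ, 0 < c ∧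
        (∑ᶠ v ∈ {v | v ∈ F.raySet ∧ toC v ∉ W}, (a v : ℝ) • v) = c • w := by
  classical
  open Stmt3Aux in
  -- dispatch the degenerate case n = 0
  rcases Nat.eq_zero_or_pos n with hn0 | hn
  · obtain ⟨v, hv⟩ := hWne
    exfalso
    apply hv
    have hv0 : toC v = 0 := by
      funext i
      exact absurd i.isLt (by omega)
    rw [hv0]
    exact W.zero_mem
  have hSfin : {v : V n | v ∈ F.raySet ∧ toC v ∉ W}.Finite :=
    Set.Finite.subset (raySet_finite (F := F)) (fun v hv => hv.1)
  set Sf : Finset (V n) := hSfin.toFinset with hSf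
  have hSmem : ∀ v : V n, v ∈ Sf ↔ (v ∈ F.raySet ∧ toC v ∉ W) := fun v => by
    rw [hSf, Set.Finite.mem_toFinset]
    rfl
  have hsetS : {v : V n | v ∈ F.raySet ∧ toC v ∉ W} = (Sf : Set (V n)) := by
    rw [hSf, Set.Finite.coe_toFinset]
  -- rational coordinates of ray generators
  have hrayrat : ∀ v : V n, ∃ f : Fin n → ℚ, v ∈ F.raySet → ∀ i, v i = (f i : ℝ) := by
    intro v
    by_cases hv : v ∈ F.raySet
    · obtain ⟨w, hw, _⟩ := raySet_prim hv
      refine ⟨fun i => (w i : ℚ), fun _ i => ?_⟩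
      rw [hw]
      push_cast
      rfl
    · exact ⟨0, fun h => absurd h hv⟩
  choose rQ hrQ using hrayrat
  -- S is nonempty
  have hSne : Sf.Nonempty := by
    by_contra hemp
    rw [Finset.not_nonempty_iff_eq_empty] at hemp
    obtain ⟨v, hv⟩ := hWne
    apply hv
    obtain ⟨s, hs, hmem⟩ := exists_cone hcomp v
    refine toC_mem_span (fun w hw => ?_) (coneSpan_subset_span s hmem)
    have hwray : w ∈ F.raySet := mem_raySet_of_mem_gens hs (by exact_mod_cast hw)
    by_contra hnW
    have hmem2 : w ∈ Sf := (hSmem w).mpr ⟨hwray, hnW⟩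
    rw [hemp] at hmem2
    exact absurd hmem2 (Finset.notMem_empty w)
  -- φ vanishes on S
  have hφS : ∀ v ∈ Sf, φ v = 0 := fun v hv =>
    hzero v ((hSmem v).mp hv).1 ((hSmem v).mp hv).2
  set x : V n := ∑ v ∈ Sf, v with hx
  have hφx : φ x = 0 := by
    have h := Z_sum hcomp hnp hpl hsc Sf 1 (fun v _ => zero_le_one) hφS
    simp only [Pi.one_apply, one_smul] at h
    rw [hx]
    exact h
  obtain ⟨s', hs', hmem'⟩ := exists_cone hcomp x
  obtain ⟨s₀, hs₀, hsub₀, hrel₀⟩ := exists_relint hs' hmem'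
  -- every generator of S lies in the cone s₀
  have hScone : ∀ v ∈ Sf, v ∈ coneSpan (s₀ : Set (V n)) := by
    intro v hv
    have hφv : φ v = 0 := hφS v hv
    have hφxv : φ (∑ w ∈ Sf.erase v, w) = 0 := by
      have h := Z_sum hcomp hnp hpl hsc (Sf.erase v) 1 (fun w _ => zero_le_one)
        (fun w hw => hφS w (Finset.mem_of_mem_erase hw))
      simpa only [Pi.one_apply, one_smul] using h
    obtain ⟨t, htg, hxvt, hvt, _⟩ := Z_add hnp hpl hsc hφxv hφv
    have hxt : x ∈ coneSpan (t : Set (V n)) := by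
      have hxe : (∑ w ∈ Sf.erase v, w) + v = x := by
        rw [hx]
        exact Finset.sum_erase_add Sf _ hv
      rw [← hxe]
      exact add_mem_coneSpan hxvt hvt
    have hsub : s₀ ⊆ t := relint_subset hs₀ htg hrel₀ hxt
    obtain ⟨p, hp, hpe⟩ := mem_coneSpan_iff.mp hxvt
    obtain ⟨q, hq, hqe⟩ := mem_coneSpan_iff.mp hvt
    obtain ⟨cr, hcr, hcre⟩ := hrel₀
    have hxt2 : x = ∑ w ∈ t, (p w + q w) • w := by
      have h1 : x = (∑ w ∈ Sf.erase v, w) + v := by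
        rw [hx]
        exact (Finset.sum_erase_add Sf _ hv).symm
      rw [h1, hpe, hqe, ← Finset.sum_add_distrib]
      exact Finset.sum_congr rfl fun w _ => (add_smul _ _ _).symm
    have hxs₀ : x = ∑ w ∈ t, (if w ∈ s₀ then cr w else 0) • w := by
      rw [hcre, ← Finset.sum_subset hsub (fun w _ hws₀ => by simp [hws₀])]
      exact Finset.sum_congr rfl fun w hws₀ => by simp [hws₀]
    have huniq := coeffs_unique (F.indep t htg) (hxt2.symm.trans hxs₀)
    have hqzero : ∀ w ∈ t, w ∉ s₀ → q w = 0 := by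
      intro w hwt hws₀
      have h2 := huniq w hwt
      simp only [hws₀, if_false] at h2
      have hp' := hp w hwt
      have hq' := hq w hwt
      linarith
    rw [mem_coneSpan_iff]
    refine ⟨q, fun w hw' => hq w (hsub hw'), ?_⟩
    rw [hqe]
    exact (Finset.sum_subset hsub (fun w hwt hws₀ => by
      rw [hqzero w hwt hws₀, zero_smul])).symm
  -- a full-dimensional cone containing s₀
  obtain ⟨tmax, htmg, htmc, hsubmax⟩ := exists_maximal_cone hcomp hn hs₀ hrel₀
  -- positive rational relation via completeness at -x
  obtain ⟨s₁, hs₁, hmem₁⟩ := exists_cone hcomp (-x)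
  obtain ⟨c₁, hc₁, hc₁e⟩ := mem_coneSpan_iff.mp hmem₁
  have hxqi : ∀ i, x i = ((∑ v ∈ Sf, rQ v i : ℚ) : ℝ) := by
    intro i
    rw [hx, Finset.sum_apply]
    push_cast
    exact Finset.sum_congr rfl fun v hv => hrQ v ((hSmem v).mp hv).1 i
  have hyQe : ∀ i, (-x) i = ((-(∑ v ∈ Sf, rQ v i) : ℚ) : ℝ) := by
    intro i
    rw [Pi.neg_apply, hxqi i]
    push_cast
    ring
  have hratc := rat_coeffs (F.indep s₁ hs₁) (fun v => rQ (v : V n))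
    (fun v i => hrQ (v : V n) (mem_raySet_of_mem_gens hs₁ v.2) i)
    (fun i => -(∑ v ∈ Sf, rQ v i)) hyQe hc₁e
  have hc₁Q : ∀ w : V n, ∃ q : ℚ, w ∈ s₁ → c₁ w = (q : ℝ) := by
    intro w
    by_cases hw : w ∈ s₁
    · obtain ⟨q, hq⟩ := hratc w hw
      exact ⟨q, fun _ => hq⟩
    · exact ⟨0, fun h => absurd h hw⟩
  choose c₁Q hc₁Qe using hc₁Q
  set a : V n → ℚ := fun v => 1 + (if v ∈ s₁ then c₁Q v else 0) with ha
  have hapos : ∀ v ∈ Sf, 0 < a v := by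
    intro v _
    rw [ha]
    by_cases hv1 : v ∈ s₁
    · simp only [hv1, if_true]
      have h1 : (0:ℝ) ≤ (c₁Q v : ℝ) := by
        rw [← hc₁Qe v hv1]
        exact hc₁ v hv1
      have h2 : (0:ℚ) ≤ c₁Q v := by exact_mod_cast h1
      linarith
    · simp [hv1]
  have haR : ∀ v, (a v : ℝ) = 1 + (if v ∈ s₁ then c₁ v else 0) := by
    intro v
    rw [ha]
    by_cases hv1 : v ∈ s₁
    · simp only [hv1, if_true]
      push_cast
      rw [hc₁Qe v hv1]
    · simp [hv1]
  set v₀ : V n := ∑ v ∈ Sf, (a v : ℝ) • v with hv₀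
  -- coefficients of S-generators in the cone s₀
  have hqc : ∀ v : V n, ∃ qcv : V n → ℝ,
      v ∈ Sf → ((∀ w ∈ s₀, 0 ≤ qcv w) ∧ v = ∑ w ∈ s₀, qcv w • w) := by
    intro v
    by_cases hv : v ∈ Sf
    · obtain ⟨qcv, h1, h2⟩ := mem_coneSpan_iff.mp (hScone v hv)
      exact ⟨qcv, fun _ => ⟨h1, h2⟩⟩
    · exact ⟨0, fun h => absurd h hv⟩
  choose qc hqcs using hqc
  have hv₀exp : v₀ = ∑ w ∈ s₀, (∑ v ∈ Sf, (a v : ℝ) * qc v w) • w := by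
    have h1 : ∀ v ∈ Sf, (a v : ℝ) • v = ∑ w ∈ s₀, ((a v : ℝ) * qc v w) • w := by
      intro v hv
      calc (a v : ℝ) • v = (a v : ℝ) • ∑ w ∈ s₀, qc v w • w := by rw [← (hqcs v hv).2]
        _ = ∑ w ∈ s₀, ((a v : ℝ) * qc v w) • w := by
            rw [Finset.smul_sum]
            exact Finset.sum_congr rfl fun w _ => smul_smul _ _ _
    rw [hv₀, Finset.sum_congr rfl h1, Finset.sum_comm]
    exact Finset.sum_congr rfl fun w _ => (Finset.sum_smul).symm
  have hCnn : ∀ w ∈ s₀, 0 ≤ ∑ v ∈ Sf, (a v : ℝ) * qc v w := by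
    intro w hw
    refine Finset.sum_nonneg fun v hv => mul_nonneg ?_ ((hqcs v hv).1 w hw)
    have := hapos v hv
    positivity
  -- v₀ ≠ 0
  have hv₀ne : v₀ ≠ 0 := by
    intro h0
    have hzc : ∀ w ∈ s₀, (∑ v ∈ Sf, (a v : ℝ) * qc v w) = 0 := by
      have h1 : ∑ w ∈ s₀, (∑ v ∈ Sf, (a v : ℝ) * qc v w) • w = ∑ w ∈ s₀, (0:ℝ) • w := by
        rw [← hv₀exp, h0]
        simp
      intro w hw
      have := coeffs_unique (F.indep s₀ hs₀) h1 w hw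
      simpa using this
    obtain ⟨vs, hvs⟩ := hSne
    have hqz : ∀ w ∈ s₀, qc vs w = 0 := by
      intro w hw
      have h2 := (Finset.sum_eq_zero_iff_of_nonneg (fun v hv =>
        mul_nonneg (le_of_lt (by exact_mod_cast hapos v hv)) ((hqcs v hv).1 w hw))).mp
        (hzc w hw) vs hvs
      have hav : (0:ℝ) < (a vs : ℝ) := by exact_mod_cast hapos vs hvs
      rcases mul_eq_zero.mp h2 with h3 | h3
      · linarith
      · exact h3
    have hv0 : vs = 0 := by
      rw [(hqcs vs hvs).2]
      exact Finset.sum_eq_zero fun w hw => by rw [hqz w hw, zero_smul]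
    exact ((hSmem vs).mp hvs).1.2 hv0
  -- rational coordinates of v₀
  have hv₀rat : ∀ i, ∃ q : ℚ, v₀ i = (q : ℝ) := by
    intro i
    refine ⟨∑ v ∈ Sf, a v * rQ v i, ?_⟩
    rw [hv₀, Finset.sum_apply]
    push_cast
    refine Finset.sum_congr rfl fun v hv => ?_
    rw [Pi.smul_apply, smul_eq_mul, hrQ v ((hSmem v).mp hv).1 i]
  -- v₀ lies in the span of the rays inside W
  have hv₀x : v₀ = x + ∑ w ∈ s₁ ∩ Sf, c₁ w • w := by
    rw [hv₀]
    have h1 : ∀ v ∈ Sf, (a v : ℝ) • v = v + (if v ∈ s₁ then c₁ v else 0) • v := by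
      intro v _
      rw [haR v, add_smul, one_smul]
    rw [Finset.sum_congr rfl h1, Finset.sum_add_distrib, hx]
    congr 1
    rw [Finset.inter_comm]
    rw [← Finset.sum_ite_mem Sf s₁ (fun v => c₁ v • v)]
    exact Finset.sum_congr rfl fun v _ => by
      split_ifs with h
      · rfl
      · rw [zero_smul]
  have hkey : v₀ = -∑ w ∈ s₁ \ Sf, c₁ w • w := by
    have hsplit : ∑ w ∈ s₁ ∩ Sf, c₁ w • w + ∑ w ∈ s₁ \ Sf, c₁ w • w = ∑ w ∈ s₁, c₁ w • w :=
      Finset.sum_inter_add_sum_sdiff s₁ Sf _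
    have hx0 : x + ∑ w ∈ s₁, c₁ w • w = 0 := by
      rw [← hc₁e]
      abel
    refine eq_neg_of_add_eq_zero_left ?_
    rw [hv₀x, add_assoc, hsplit]
    exact hx0
  have hv₀span : v₀ ∈ Submodule.span ℝ {v : V n | v ∈ F.raySet ∧ toC v ∈ W} := by
    rw [hkey]
    refine Submodule.neg_mem _ (Submodule.sum_mem _ fun w hw =>
      Submodule.smul_mem _ _ (Submodule.subset_span ?_))
    obtain ⟨hw₁, hwnS⟩ := Finset.mem_sdiff.mp hw
    have hwray := mem_raySet_of_mem_gens hs₁ hw₁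
    refine ⟨hwray, ?_⟩
    by_contra hnW
    exact hwnS ((hSmem w).mpr ⟨hwray, hnW⟩)
  -- the ray of v₀ is not a ray of the fan
  have hlast : ¬ ∃ w ∈ F.raySet, ∃ cc : ℝ, 0 < cc ∧ v₀ = cc • w := by
    rintro ⟨w, hwray, cc, hcc, heqr⟩
    have hwg : ({w} : Finset (V n)) ∈ F.gens := hwray.1
    have hv₀w : v₀ ∈ coneSpan (({w} : Finset (V n)) : Set (V n)) := by
      rw [mem_coneSpan_iff]
      exact ⟨fun _ => cc, fun _ _ => hcc.le, by rw [Finset.sum_singleton, heqr]⟩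
    have hv₀s₀ : v₀ ∈ coneSpan (s₀ : Set (V n)) :=
      mem_coneSpan_iff.mpr ⟨_, hCnn, hv₀exp⟩
    obtain ⟨s₂, hs₂, hsub₂, hrel₂⟩ := exists_relint hs₀ hv₀s₀
    have hs₂w : s₂ ⊆ {w} := relint_subset hs₂ hwg hrel₂ hv₀w
    have hs₂ne : s₂.Nonempty := by
      rw [Finset.nonempty_iff_ne_empty]
      intro hh
      obtain ⟨cr2, _, he2⟩ := hrel₂
      rw [hh] at he2
      simp only [Finset.sum_empty] at he2
      exact hv₀ne he2
    have hs₂eq : s₂ = {w} := by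
      rcases Finset.subset_singleton_iff.mp hs₂w with h | h
      · exact absurd h (Finset.nonempty_iff_ne_empty.mp hs₂ne)
      · exact h
    have hws₀ : w ∈ s₀ := hsub₂ (by rw [hs₂eq]; exact Finset.mem_singleton_self w)
    have hv₀w' : (∑ w' ∈ s₀, (if w' = w then cc else 0) • w') = v₀ := by
      rw [Finset.sum_eq_single_of_mem w hws₀ (fun b _ hb => by simp [hb])]
      simp only [if_pos rfl]
      exact heqr.symm
    have hcoeff := coeffs_unique (F.indep s₀ hs₀) (hv₀exp.symm.trans hv₀w'.symm)
    have hqzero : ∀ v ∈ Sf, ∀ w' ∈ s₀, w' ≠ w → qc v w' = 0 := by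
      intro v hv w' hw' hne
      have h0 := hcoeff w' hw'
      rw [if_neg hne] at h0
      have h2 := (Finset.sum_eq_zero_iff_of_nonneg (fun u hu =>
        mul_nonneg (le_of_lt (by exact_mod_cast hapos u hu)) ((hqcs u hu).1 w' hw'))).mp
        h0 v hv
      have hav : (0:ℝ) < (a v : ℝ) := by exact_mod_cast hapos v hv
      rcases mul_eq_zero.mp h2 with h3 | h3
      · linarith
      · exact h3
    have hvw : ∀ v ∈ Sf, v = qc v w • w := by
      intro v hv
      have h2 := (hqcs v hv).2
      rw [Finset.sum_eq_single_of_mem w hws₀ (fun b hb hbw => by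
        rw [hqzero v hv b hb hbw, zero_smul])] at h2
      exact h2
    obtain ⟨vs, hvs⟩ := hSne
    have hvsray := ((hSmem vs).mp hvs).1
    have hvsW := ((hSmem vs).mp hvs).2
    have heqs := hvw vs hvs
    have hlpos : 0 < qc vs w := by
      rcases ((hqcs vs hvs).1 w hws₀).lt_or_eq with h | h
      · exact h
      · exfalso
        apply hvsray.2
        rw [heqs, ← h, zero_smul]
    have hvseq : vs = w := prim_eq_of_smul (raySet_prim hvsray) (raySet_prim hwray) hlpos heqs
    have htoCv₀ : toC v₀ ∈ W := toC_mem_span (fun u hu => hu.2) hv₀span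
    have htoCw : toC w ∈ W := by
      have h2 : toC v₀ = cc • toC w := by
        rw [heqr]
        exact (toCL (n := n)).map_smul cc w
      have h1 : toC w = cc⁻¹ • toC v₀ := by
        rw [h2, smul_smul, inv_mul_cancel₀ (ne_of_gt hcc), one_smul]
      rw [h1]
      exact real_smul_mem htoCv₀ _
    rw [hvseq] at hvsW
    exact hvsW htoCw
  -- assemble
  rw [hsetS]
  refine ⟨a, ?_, ?_, ?_, ?_, ?_, ?_⟩
  · intro v hv
    exact hapos v (by exact_mod_cast hv)
  · rw [finsum_mem_coe_finset, ← hv₀]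
    exact hv₀ne
  · intro i
    rw [finsum_mem_coe_finset, ← hv₀]
    exact hv₀rat i
  · rw [finsum_mem_coe_finset, ← hv₀]
    exact hv₀span
  · refine ⟨tmax, htmg, htmc, fun v hv => ?_⟩
    exact coneSpan_mono (by exact_mod_cast hsubmax) (hScone v (by exact_mod_cast hv))
  · rw [finsum_mem_coe_finset, ← hv₀]
    exact hlast
end
end

section
/- The numbers b_s = (q_s - δ)/q_s, where q_s = (⌈k̃m/s⌉ - k̃m/s) + k̃/s satisfies |q_s - q| < (2m-2)/s for a fixed q ∈ (1/m, 1+(m-1)/m), converge to (q-δ)/q as s → ∞ along integers coprime to m. Consequently every point of the open interval (1 - mδ, 1 - (m/(2m-1))δ) is an accumulation point of the set {(q_s - δ)/q_s}, and hence this set is dense in [1-mδ, 1-(m/(2m-1))δ] and satisfies neither the ascending nor the descending chain condition. -/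
open scoped BigOperators
open Filter

noncomputable section

/-- The value `q_s = (⌈k̃m/s⌉ - k̃m/s) + k̃/s`. -/
def Qval (k m s : ℕ) : ℝ :=
  (((⌈((k * m : ℚ)) / (s : ℚ)⌉ : ℤ) : ℝ) - (k * m : ℝ) / s) + (k : ℝ) / s

/-- The set of thresholds `b = (q' - δ)/q'` realized by `q' = Qval k s` with `s` coprime
to `m` and `0 < k < s`. -/
def Bset (δ : ℝ) (m : ℕ) : Set ℝ :=
  {b : ℝ | ∃ s k : ℕ, 1 < s ∧ Nat.Coprime m s ∧ 0 < k ∧ k < s ∧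
    b = (Qval k m s - δ) / Qval k m s}

lemma qval_eq (m t a b : ℕ) (hm : 2 ≤ m) (ha : a < m) (hb1 : 1 ≤ b) (hbt : b ≤ t) :
    Qval (t*a + b) m (m*t+1)
      = (((m:ℝ)*t+1) + ((a:ℝ)*((t:ℝ)+1) - (b:ℝ)*((m:ℝ)-1))) / ((m:ℝ)*t+1) := by
  have hsQ : (0:ℚ) < ((m*t+1 : ℕ) : ℚ) := by positivity
  have hceil : ⌈(((t*a+b : ℕ) : ℚ) * (m : ℚ)) / ((m*t+1 : ℕ) : ℚ)⌉ = (a:ℤ) + 1 := by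
    rw [Int.ceil_eq_iff]
    have h1 : ((a : ℕ) : ℚ) * ((m*t+1 : ℕ) : ℚ) < ((t*a+b : ℕ) : ℚ) * (m : ℚ) := by
      have : a * (m*t+1) < (t*a+b) * m := by nlinarith
      exact_mod_cast this
    have h2 : ((t*a+b : ℕ) : ℚ) * (m : ℚ) ≤ ((a+1 : ℕ) : ℚ) * ((m*t+1 : ℕ) : ℚ) := by
      have : (t*a+b) * m ≤ (a+1) * (m*t+1) := by nlinarith
      exact_mod_cast this
    constructor
    · rw [lt_div_iff₀ hsQ]
      push_cast at h1 ⊢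
      linarith
    · rw [div_le_iff₀ hsQ]
      push_cast at h2 ⊢
      linarith
  have hsR : ((m:ℝ)*t+1) ≠ 0 := by positivity
  unfold Qval
  rw [show (((t*a+b : ℕ) * m : ℚ)) = (((t*a+b : ℕ) : ℚ) * (m : ℚ)) by push_cast; ring] at *
  rw [hceil]
  push_cast
  field_simp
  ring

lemma coverD (m t : ℕ) (hm : 2 ≤ m) (ht : 2 ≤ t) (z : ℝ)
    (hz1 : -(((m:ℝ)-1)*((t:ℝ)-1)) ≤ z) (hz2 : z ≤ ((m:ℝ)-1)*t) :
    ∃ a b : ℕ, a < m ∧ 1 ≤ b ∧ b ≤ t ∧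
      ((a:ℝ)*((t:ℝ)+1) - (b:ℝ)*((m:ℝ)-1)) ≠ z ∧
      |((a:ℝ)*((t:ℝ)+1) - (b:ℝ)*((m:ℝ)-1)) - z| ≤ 2*((m:ℝ)-1) := by
  have hmR : (2:ℝ) ≤ (m:ℝ) := by exact_mod_cast hm
  have hM : (1:ℝ) ≤ (m:ℝ) - 1 := by linarith
  have hM0 : (0:ℝ) < (m:ℝ) - 1 := by linarith
  have hT : (2:ℝ) ≤ (t:ℝ) := by exact_mod_cast ht
  obtain ⟨M, hMdef⟩ : ∃ x : ℝ, x = (m:ℝ) - 1 := ⟨_, rfl⟩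
  rw [← hMdef] at hz1 hz2 hM hM0 ⊢
  rcases le_or_gt z (-M) with hA | hB
  · -- Case A : z ≤ -M
    set b₀ : ℤ := ⌊-z / M⌋ with hb0
    have h1 : (1:ℝ) ≤ -z / M := by rw [le_div_iff₀ hM0]; linarith
    have hb01 : 1 ≤ b₀ := by
      rw [hb0]; exact_mod_cast Int.le_floor.2 (by exact_mod_cast h1)
    have hfl : (b₀ : ℝ) ≤ -z/M := Int.floor_le _
    have hfu : -z/M < (b₀ : ℝ) + 1 := Int.lt_floor_add_one _
    have hbM1 : (b₀:ℝ) * M ≤ -z := (le_div_iff₀ hM0).1 hfl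
    have hbM2 : -z < ((b₀:ℝ) + 1) * M := (div_lt_iff₀ hM0).1 hfu
    have hub : -z/M ≤ (t:ℝ) - 1 := by
      rw [div_le_iff₀ hM0]; nlinarith
    have hb0t : b₀ ≤ (t:ℤ) - 1 := by
      have : (b₀ : ℝ) ≤ ((t:ℤ) - 1 : ℤ) := by push_cast; linarith [hfl.trans hub]
      exact_mod_cast this
    by_cases hz : z = -((b₀:ℝ) * M)
    · -- use b₀ + 1
      have hcb : (((b₀+1).toNat : ℕ) : ℝ) = (b₀:ℝ) + 1 := by
        have : ((b₀+1).toNat : ℤ) = b₀ + 1 := Int.toNat_of_nonneg (by omega)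
        exact_mod_cast this
      refine ⟨0, (b₀+1).toNat, by omega, by omega, by omega, ?_, ?_⟩
      · rw [hcb]
        push_cast
        intro h
        rw [hz] at h
        nlinarith
      · rw [hcb, hz]
        have : ((0:ℕ):ℝ) * ((t:ℝ)+1) - ((b₀:ℝ)+1) * M - -((b₀:ℝ) * M) = -M := by
          push_cast; ring
        rw [this, abs_of_nonpos (by linarith)]
        linarith
    · -- use b₀
      have hcb : ((b₀.toNat : ℕ) : ℝ) = (b₀:ℝ) := by
        have : (b₀.toNat : ℤ) = b₀ := Int.toNat_of_nonneg (by omega)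
        exact_mod_cast this
      refine ⟨0, b₀.toNat, by omega, by omega, by omega, ?_, ?_⟩
      · rw [hcb]
        intro h
        apply hz
        rw [← h]; push_cast; ring
      · rw [hcb]
        have he : ((0:ℕ):ℝ) * ((t:ℝ)+1) - (b₀:ℝ) * M - z = -((b₀:ℝ)*M) - z := by
          push_cast; ring
        rw [he, abs_of_nonneg (by linarith)]
        linarith
  · rcases le_or_gt z M with hBle | hC
    · -- Case B : -M < z ≤ M
      refine ⟨0, 1, by omega, le_refl 1, by omega, ?_, ?_⟩
      · push_cast
        intro h
        nlinarith
      · have he : ((0:ℕ):ℝ) * ((t:ℝ)+1) - ((1:ℕ):ℝ) * M - z = -M - z := by push_cast; ring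
        rw [he, abs_of_nonpos (by linarith)]
        linarith
    · -- Case C : z > M
      have ht1 : (0:ℝ) < (t:ℝ) + 1 := by linarith
      obtain ⟨a₀, ha0⟩ : ∃ x : ℤ, x = ⌈z / ((t:ℝ)+1)⌉ := ⟨_, rfl⟩
      have hz0 : 0 < z := lt_trans hM0 hC
      have ha01 : 1 ≤ a₀ := by
        rw [ha0]
        exact Int.ceil_pos.2 (div_pos hz0 ht1)
      have ha0m : a₀ ≤ (m:ℤ) - 1 := by
        rw [ha0]
        apply Int.ceil_le.2
        rw [div_le_iff₀ ht1]
        push_cast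
        nlinarith
      have hle : z / ((t:ℝ)+1) ≤ (a₀:ℝ) := ha0 ▸ Int.le_ceil _
      have hlt : (a₀:ℝ) < z / ((t:ℝ)+1) + 1 := ha0 ▸ Int.ceil_lt_add_one _
      obtain ⟨w, hwdef⟩ : ∃ x : ℝ, x = (a₀:ℝ) * ((t:ℝ)+1) - z := ⟨_, rfl⟩
      have hw0 : 0 ≤ w := by
        rw [hwdef]
        have := (div_le_iff₀ ht1).1 hle
        linarith
      have hw1 : w < (t:ℝ) + 1 := by
        rw [hwdef]
        have hzz : z / ((t:ℝ)+1) * ((t:ℝ)+1) = z := by field_simp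
        nlinarith [(mul_lt_mul_of_pos_right hlt ht1)]
      have hca : ((a₀.toNat : ℕ) : ℝ) = (a₀:ℝ) := by
        have : (a₀.toNat : ℤ) = a₀ := Int.toNat_of_nonneg (by omega)
        exact_mod_cast this
      have ham : a₀.toNat < m := by omega
      obtain ⟨b₀, hb0⟩ : ∃ x : ℤ, x = ⌊w / M⌋ + 1 := ⟨_, rfl⟩
      have hwM0 : 0 ≤ w / M := div_nonneg hw0 (le_of_lt hM0)
      have hb01 : 1 ≤ b₀ := by
        have : 0 ≤ ⌊w / M⌋ := Int.floor_nonneg.2 hwM0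
        omega
      have hfl : ((b₀:ℝ) - 1) ≤ w/M := by
        rw [hb0]; push_cast; linarith [Int.floor_le (w/M)]
      have hfu : w/M < (b₀:ℝ) := by
        rw [hb0]; push_cast; linarith [Int.lt_floor_add_one (w/M)]
      have hbM1 : ((b₀:ℝ) - 1) * M ≤ w := (le_div_iff₀ hM0).1 (by linarith [hfl])
      have hbM2 : w < (b₀:ℝ) * M := (div_lt_iff₀ hM0).1 hfu
      rcases le_or_gt b₀ (t:ℤ) with hC1 | hC2
      · -- C1
        have hcb : ((b₀.toNat : ℕ) : ℝ) = (b₀:ℝ) := by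
          have : (b₀.toNat : ℤ) = b₀ := Int.toNat_of_nonneg (by omega)
          exact_mod_cast this
        refine ⟨a₀.toNat, b₀.toNat, ham, by omega, by omega, ?_, ?_⟩
        · rw [hcb, hca]
          intro h
          have : w = (b₀:ℝ) * M := by rw [hwdef]; linarith [h]
          linarith
        · rw [hcb, hca]
          have he : (a₀:ℝ) * ((t:ℝ)+1) - (b₀:ℝ) * M - z = w - (b₀:ℝ)*M := by
            rw [hwdef]; ring
          rw [he, abs_of_nonpos (by linarith)]
          nlinarith
      · -- C2 : b₀ ≥ t+1, forces m = 2
        have htM : (t:ℝ) * M ≤ w := by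
          have h1' : (t:ℤ) + 1 ≤ b₀ := hC2
          have h1 : (t:ℝ) + 1 ≤ (b₀:ℝ) := by exact_mod_cast h1'
          have h2 : (t:ℝ) * M ≤ ((b₀:ℝ) - 1) * M :=
            mul_le_mul_of_nonneg_right (by linarith) (le_of_lt hM0)
          linarith [hbM1]
        have hm2 : m = 2 := by
          by_contra hne
          have h3 : 3 ≤ m := by omega
          have : (3:ℝ) ≤ (m:ℝ) := by exact_mod_cast h3
          have hM2 : (2:ℝ) ≤ M := by rw [hMdef]; linarith
          have hx : (t:ℝ)*2 ≤ (t:ℝ)*M := mul_le_mul_of_nonneg_left hM2 (by linarith)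
          linarith [htM, hw1, hT, hx]
        have hM1 : M = 1 := by rw [hMdef, hm2]; norm_num
        rw [hM1] at htM
        by_cases hwt : w = (t:ℝ)
        · -- b = t - 1
          have hcb : (((t-1 : ℕ)) : ℝ) = (t:ℝ) - 1 := by
            have : ((t - 1 : ℕ) : ℤ) = (t:ℤ) - 1 := by omega
            exact_mod_cast this
          refine ⟨a₀.toNat, t - 1, ham, by omega, by omega, ?_, ?_⟩
          · rw [hcb, hca, hM1]
            intro h
            have : w = (t:ℝ) - 1 := by rw [hwdef]; linarith [h]
            rw [hwt] at this; linarith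
          · rw [hcb, hca, hM1]
            have he : (a₀:ℝ) * ((t:ℝ)+1) - ((t:ℝ)-1) * 1 - z = w - (t:ℝ) + 1 := by
              rw [hwdef]; ring
            rw [he, hwt]
            have hone : |(t:ℝ) - (t:ℝ) + 1| = 1 := by norm_num
            rw [hone]
            linarith [hM]
        · -- b = t
          refine ⟨a₀.toNat, t, ham, by omega, le_refl t, ?_, ?_⟩
          · rw [hca, hM1]
            intro h
            apply hwt
            rw [hwdef]; linarith [h]
          · rw [hca, hM1]
            have he : (a₀:ℝ) * ((t:ℝ)+1) - (t:ℝ) * 1 - z = w - (t:ℝ) := by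
              rw [hwdef]; ring
            rw [he, abs_of_nonneg (by linarith [htM])]
            linarith [hw1, hM]

lemma approx (m : ℕ) (hm : 2 ≤ m) (q : ℝ) (hq1 : 1 < q*m) (hq2 : q*m < 2*m-1)
    (ε : ℝ) (hε : 0 < ε) :
    ∃ s k : ℕ, 1 < s ∧ Nat.Coprime m s ∧ 0 < k ∧ k < s ∧
      Qval k m s ≠ q ∧ |Qval k m s - q| < ε := by
  have hmR : (2:ℝ) ≤ (m:ℝ) := by exact_mod_cast hm
  have hm0 : (0:ℝ) < m := by linarith
  have hq0 : 0 < q := by nlinarith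
  have hc1 : 0 < q*m - 1 := by linarith
  have hc2 : 0 < 2*m - 1 - q*m := by linarith
  obtain ⟨t, htT⟩ := exists_nat_gt
    (max (max ((m:ℝ)/(q*m - 1)) ((m:ℝ)/(2*(m:ℝ) - 1 - q*m))) (max 2 (2*(m:ℝ)/ε)))
  have htc1 : (m:ℝ) < t * (q*m - 1) := by
    have h := lt_of_le_of_lt (le_max_left _ _ |>.trans (le_max_left _ _)) htT
    rw [div_lt_iff₀ hc1] at h
    linarith
  have htc2 : (m:ℝ) < t * (2*(m:ℝ) - 1 - q*m) := by
    have h := lt_of_le_of_lt (le_max_right _ _ |>.trans (le_max_left _ _)) htT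
    rw [div_lt_iff₀ hc2] at h
    linarith
  have htR2 : (2:ℝ) < t := lt_of_le_of_lt (le_max_left _ _ |>.trans (le_max_right _ _)) htT
  have hεt : 2*(m:ℝ) < ε * t := by
    have h := lt_of_le_of_lt (le_max_right _ _ |>.trans (le_max_right _ _)) htT
    rw [div_lt_iff₀ hε] at h
    linarith
  have ht2 : 2 ≤ t := by exact_mod_cast htR2.le
  -- apply coverD with z = e₀
  have hz1 : -(((m:ℝ)-1)*((t:ℝ)-1)) ≤ (q-1)*((m:ℝ)*t+1) := by nlinarith
  have hz2 : (q-1)*((m:ℝ)*t+1) ≤ ((m:ℝ)-1)*t := by nlinarith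
  obtain ⟨a, b, ha, hb1, hbt, hne, habs⟩ := coverD m t hm ht2 _ hz1 hz2
  have hks : t*a + b < m*t + 1 := by
    have h1 : t*(a+1) ≤ t*m := Nat.mul_le_mul_left t ha
    have h2 : t*(a+1) = t*a + t := by ring
    have h3 : t*m = m*t := by ring
    omega
  have hsR : (0:ℝ) < (m:ℝ)*t+1 := by positivity
  have hqrep : q = (((m:ℝ)*t+1) + (q-1)*((m:ℝ)*t+1))/((m:ℝ)*t+1) := by
    field_simp
    ring
  refine ⟨m*t+1, t*a+b, by have := Nat.mul_pos (show 0 < m by omega) (show 0 < t by omega); omega, by simp [Nat.coprime_mul_right_add_right],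
    by omega, hks, ?_, ?_⟩
  · rw [qval_eq m t a b hm ha hb1 hbt]
    intro h
    rw [hqrep] at h
    apply hne
    field_simp at h
    linarith
  · rw [qval_eq m t a b hm ha hb1 hbt]
    have hrw : (((m:ℝ)*t+1) + ((a:ℝ)*((t:ℝ)+1) - (b:ℝ)*((m:ℝ)-1))) / ((m:ℝ)*t+1) - q
        = (((a:ℝ)*((t:ℝ)+1) - (b:ℝ)*((m:ℝ)-1)) - (q-1)*((m:ℝ)*t+1))/((m:ℝ)*t+1) := by
      field_simp
      ring
    rw [hrw, abs_div, abs_of_pos hsR, div_lt_iff₀ hsR]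
    calc |((a:ℝ)*((t:ℝ)+1) - (b:ℝ)*((m:ℝ)-1)) - (q-1)*((m:ℝ)*t+1)| ≤ 2*((m:ℝ)-1) := habs
      _ < ε * ((m:ℝ)*t+1) := by nlinarith

/-- fix `0 < δ ≤ 1/2` and `m = ⌊1/δ⌋`.  For `q ∈ (1/m, 1+(m-1)/m)`,
any choice `s ↦ q_s` with `|q_s - q| < (2m-2)/s` along integers `s` coprime to `m`
yields `b_s = (q_s - δ)/q_s → (q - δ)/q` as `s → ∞` along such integers.  Consequently
every point of `(1 - mδ, 1 - (m/(2m-1))δ)` is an accumulation point of the set of such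
thresholds, the set is dense in `[1 - mδ, 1 - (m/(2m-1))δ]`, and it satisfies neither
the ascending nor the descending chain condition. -/
theorem stmt12 (δ : ℝ) (hδ0 : 0 < δ) (hδ : δ ≤ 1 / 2)
    (m : ℕ) (hm : (m : ℤ) = ⌊1 / δ⌋) :
    (∀ q ∈ Set.Ioo (1 / (m : ℝ)) (1 + ((m : ℝ) - 1) / m),
      ∀ qs : ℕ → ℝ,
        (∀ s : ℕ, 1 < s → Nat.Coprime m s →
          (∃ k : ℕ, 0 < k ∧ k < s ∧ qs s = Qval k m s) ∧
          |qs s - q| < (2 * (m : ℝ) - 2) / s) →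
        Tendsto (fun s : ℕ => (qs s - δ) / qs s)
          (atTop ⊓ Filter.principal {s : ℕ | Nat.Coprime m s})
          (nhds ((q - δ) / q))) ∧
    (∀ x ∈ Set.Ioo (1 - (m : ℝ) * δ) (1 - ((m : ℝ) / (2 * m - 1)) * δ),
      AccPt x (Filter.principal (Bset δ m))) ∧
    Set.Icc (1 - (m : ℝ) * δ) (1 - ((m : ℝ) / (2 * m - 1)) * δ) ⊆ closure (Bset δ m) ∧
    (∃ f : ℕ → ℝ, StrictMono f ∧ ∀ k, f k ∈ Bset δ m) ∧
    (∃ g : ℕ → ℝ, StrictAnti g ∧ ∀ k, g k ∈ Bset δ m) := by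
  have hm2 : 2 ≤ m := by
    have h2 : (2:ℝ) ≤ 1/δ := by rw [le_div_iff₀ hδ0]; linarith
    have h3 : (2:ℤ) ≤ ⌊1/δ⌋ := Int.le_floor.2 (by exact_mod_cast h2)
    rw [← hm] at h3
    exact_mod_cast h3
  have hmR : (2:ℝ) ≤ (m:ℝ) := by exact_mod_cast hm2
  have hm0 : (0:ℝ) < m := by linarith
  have h2m1 : (0:ℝ) < 2*(m:ℝ) - 1 := by linarith
  -- Part 1
  have part1 : ∀ q ∈ Set.Ioo (1 / (m : ℝ)) (1 + ((m : ℝ) - 1) / m),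
      ∀ qs : ℕ → ℝ,
        (∀ s : ℕ, 1 < s → Nat.Coprime m s →
          (∃ k : ℕ, 0 < k ∧ k < s ∧ qs s = Qval k m s) ∧
          |qs s - q| < (2 * (m : ℝ) - 2) / s) →
        Tendsto (fun s : ℕ => (qs s - δ) / qs s)
          (atTop ⊓ Filter.principal {s : ℕ | Nat.Coprime m s})
          (nhds ((q - δ) / q)) := by
    intro q hq qs hqs
    have hq0 : 0 < q := lt_trans (by positivity) hq.1
    have hev : ∀ᶠ s in (atTop ⊓ Filter.principal {s : ℕ | Nat.Coprime m s}),
        ‖qs s - q‖ ≤ (2 * (m : ℝ) - 2) / s := by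
      rw [Filter.eventually_inf_principal]
      filter_upwards [Filter.eventually_gt_atTop 1] with s hs hcop
      exact (le_of_lt ((hqs s hs hcop).2)).trans_eq' (by rw [Real.norm_eq_abs])
    have h0 : Tendsto (fun s : ℕ => (2 * (m:ℝ) - 2)/s)
        (atTop ⊓ Filter.principal {s : ℕ | Nat.Coprime m s}) (nhds 0) :=
      (tendsto_const_div_atTop_nhds_zero_nat _).mono_left inf_le_left
    have h1 : Tendsto (fun s : ℕ => qs s - q)
        (atTop ⊓ Filter.principal {s : ℕ | Nat.Coprime m s}) (nhds 0) :=
      squeeze_zero_norm' hev h0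
    have h2 : Tendsto qs (atTop ⊓ Filter.principal {s : ℕ | Nat.Coprime m s}) (nhds q) := by
      have := h1.add_const q
      simpa using this
    exact (h2.sub_const δ).div h2 (ne_of_gt hq0)
  -- Part 2
  have part2 : ∀ x ∈ Set.Ioo (1 - (m : ℝ) * δ) (1 - ((m : ℝ) / (2 * m - 1)) * δ),
      AccPt x (Filter.principal (Bset δ m)) := by
    intro x hx
    obtain ⟨hx1, hx2⟩ := hx
    have hpos : 0 < ((m:ℝ)/(2*m-1))*δ := mul_pos (div_pos hm0 h2m1) hδ0
    have h1x : 0 < 1 - x := by linarith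
    have hq0 : 0 < δ/(1-x) := div_pos hδ0 h1x
    have hq1 : 1 < (δ/(1-x))*m := by
      rw [div_mul_eq_mul_div, lt_div_iff₀ h1x]
      linarith
    have hkey : (m:ℝ)*δ < (2*(m:ℝ)-1)*(1-x) := by
      have h := mul_lt_mul_of_pos_left (show ((m:ℝ)/(2*m-1))*δ < 1 - x by linarith) h2m1
      have he : (2*(m:ℝ)-1)*(((m:ℝ)/(2*m-1))*δ) = (m:ℝ)*δ := by
        field_simp
      linarith [he ▸ h]
    have hq2 : (δ/(1-x))*m < 2*(m:ℝ)-1 := by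
      rw [div_mul_eq_mul_div, div_lt_iff₀ h1x]
      nlinarith
    have hxq : x = (δ/(1-x) - δ)/(δ/(1-x)) := by
      field_simp
      ring
    rw [accPt_iff_nhds]
    intro U hU
    rcases Metric.mem_nhds_iff.mp hU with ⟨ε, hε, hball⟩
    set q : ℝ := δ/(1-x) with hqdef
    obtain ⟨s, k, hs1, hcop, hk0, hks, hne, hlt⟩ :=
      approx m hm2 q hq1 hq2 (min (q/2) (ε*q*q/(2*δ))) (lt_min (by positivity) (by positivity))
    set v : ℝ := Qval k m s with hvdef
    have habs := abs_lt.1 hlt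
    have hv2 : q/2 < v := by
      have := min_le_left (q/2) (ε*q*q/(2*δ))
      linarith [habs.1]
    have hv0 : 0 < v := by linarith
    have hyx0 : (v - δ)/v - x = δ*(v - q)/(v*q) := by
      rw [hxq]
      field_simp
      ring
    have hnum : δ*(v - q) ≠ 0 := mul_ne_zero (ne_of_gt hδ0) (sub_ne_zero.2 hne)
    have hden : v*q ≠ 0 := (mul_pos hv0 hq0).ne'
    have hyx : (v - δ)/v ≠ x := by
      have hne0 : (v - δ)/v - x ≠ 0 := by
        rw [hyx0]
        exact div_ne_zero hnum hden
      exact sub_ne_zero.1 hne0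
    have hdist : |(v - δ)/v - x| < ε := by
      rw [hyx0, abs_div, abs_mul, abs_of_pos hδ0, abs_of_pos (mul_pos hv0 hq0),
        div_lt_iff₀ (mul_pos hv0 hq0)]
      have hb1 : |v - q| < ε*q*q/(2*δ) := lt_of_lt_of_le hlt (min_le_right _ _)
      have hb2 : δ*|v - q| < ε*q*q/2 := by
        calc δ*|v - q| < δ*(ε*q*q/(2*δ)) := mul_lt_mul_of_pos_left hb1 hδ0
          _ = ε*q*q/2 := by field_simp
      have hb3 : ε*q*q/2 < ε*(v*q) := by
        nlinarith [mul_pos (mul_pos hε hq0) (show 0 < v - q/2 by linarith)]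
      linarith
    refine ⟨(v - δ)/v, ⟨hball ?_, ⟨s, k, hs1, hcop, hk0, hks, rfl⟩⟩, hyx⟩
    rw [Metric.mem_ball, Real.dist_eq]
    exact hdist
  -- Part 3
  have hLU : 1 - (m:ℝ)*δ < 1 - ((m:ℝ)/(2*m-1))*δ := by
    have h : (m:ℝ)/(2*m-1) < m := by
      rw [div_lt_iff₀ h2m1]
      nlinarith
    nlinarith
  have part3 : Set.Icc (1 - (m : ℝ) * δ) (1 - ((m : ℝ) / (2 * m - 1)) * δ)
      ⊆ closure (Bset δ m) := by
    have hsub : Set.Ioo (1 - (m:ℝ)*δ) (1 - ((m:ℝ)/(2*m-1))*δ) ⊆ closure (Bset δ m) :=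
      fun x hx => mem_closure_iff_clusterPt.2 ((part2 x hx).clusterPt)
    calc Set.Icc (1 - (m:ℝ)*δ) (1 - ((m:ℝ)/(2*m-1))*δ)
        = closure (Set.Ioo (1 - (m:ℝ)*δ) (1 - ((m:ℝ)/(2*m-1))*δ)) := (closure_Ioo hLU.ne).symm
      _ ⊆ closure (closure (Bset δ m)) := closure_mono hsub
      _ = closure (Bset δ m) := closure_closure
  -- Parts 4 and 5
  obtain ⟨L, hLdef⟩ : ∃ x : ℝ, x = 1 - (m:ℝ)*δ := ⟨_, rfl⟩
  obtain ⟨Uu, hUdef⟩ : ∃ x : ℝ, x = 1 - ((m:ℝ)/(2*m-1))*δ := ⟨_, rfl⟩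
  have hLU' : L < Uu := by rw [hLdef, hUdef]; exact hLU
  obtain ⟨d, hddef⟩ : ∃ x : ℝ, x = (Uu - L)/3 := ⟨_, rfl⟩
  have hd0 : 0 < d := by rw [hddef]; linarith
  have part3' : Set.Icc L Uu ⊆ closure (Bset δ m) := by rw [hLdef, hUdef]; exact part3
  have hdpow : ∀ n : ℕ, 0 < d/2^n := fun n => by positivity
  have hdpow1 : ∀ n : ℕ, d/2^n ≤ d := fun n => by
    rw [div_le_iff₀ (by positivity)]
    nlinarith [one_le_pow₀ (by norm_num : (1:ℝ) ≤ 2) (n := n), hd0]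
  have Hasc : ∀ n : ℕ, ∃ b ∈ Bset δ m, dist ((L + 2*d) - d/2^n) b < d/2^(n+3) := by
    intro n
    have h1 : L ≤ (L + 2*d) - d/2^n := by linarith [hdpow1 n]
    have h2 : (L + 2*d) - d/2^n ≤ Uu := by
      have : 3*d = Uu - L := by rw [hddef]; ring
      linarith [hdpow n]
    exact Metric.mem_closure_iff.1 (part3' ⟨h1, h2⟩) _ (by positivity)
  have Hdesc : ∀ n : ℕ, ∃ b ∈ Bset δ m, dist ((L + d) + d/2^n) b < d/2^(n+3) := by
    intro n
    have h1 : L ≤ (L + d) + d/2^n := by linarith [hdpow n]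
    have h2 : (L + d) + d/2^n ≤ Uu := by
      have : 3*d = Uu - L := by rw [hddef]; ring
      linarith [hdpow1 n]
    exact Metric.mem_closure_iff.1 (part3' ⟨h1, h2⟩) _ (by positivity)
  refine ⟨part1, part2, part3, ⟨fun n => (Hasc n).choose, ?_, fun n => (Hasc n).choose_spec.1⟩,
    ⟨fun n => (Hdesc n).choose, ?_, fun n => (Hdesc n).choose_spec.1⟩⟩
  · apply strictMono_nat_of_lt_succ
    intro n
    have hn := (Hasc n).choose_spec.2
    have hn1 := (Hasc (n+1)).choose_spec.2
    rw [Real.dist_eq] at hn hn1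
    have an := abs_lt.1 hn
    have an1 := abs_lt.1 hn1
    have e1 : d/2^(n+1) = (d/2^n)/2 := by rw [pow_succ]; ring
    have e3 : d/2^(n+3) = (d/2^n)/8 := by rw [pow_add]; norm_num; ring
    have e34 : d/2^(n+1+3) = (d/2^n)/16 := by
      rw [show n+1+3 = n+4 from rfl, pow_add]; norm_num; ring
    linarith [an.1, an.2, an1.1, an1.2, e1, e3, e34, hdpow n]
  · apply strictAnti_nat_of_succ_lt
    intro n
    have hn := (Hdesc n).choose_spec.2
    have hn1 := (Hdesc (n+1)).choose_spec.2
    rw [Real.dist_eq] at hn hn1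
    have an := abs_lt.1 hn
    have an1 := abs_lt.1 hn1
    have e1 : d/2^(n+1) = (d/2^n)/2 := by rw [pow_succ]; ring
    have e3 : d/2^(n+3) = (d/2^n)/8 := by rw [pow_add]; norm_num; ring
    have e34 : d/2^(n+1+3) = (d/2^n)/16 := by
      rw [show n+1+3 = n+4 from rfl, pow_add]; norm_num; ring
    linarith [an.1, an.2, an1.1, an1.2, e1, e3, e34, hdpow n]
end
end

section
/- Let R = ℝ^d/ℤ^d and let U ⊆ R be a non-empty open subset. Then the collection of closed subgroups of R that are disjoint from U has only finitely many maximal elements with respect to inclusion. -/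
open TopologicalSpace


open Metric

noncomputable section

abbrev T1 := AddCircle (1 : ℝ)

lemma stmt14_coe_int_eq_zero (m : ℤ) : ((m : ℝ) : T1) = 0 := by
  rw [AddCircle.coe_eq_zero_iff]; exact ⟨m, by simp⟩

lemma stmt14_coe_add (r s : ℝ) : ((r + s : ℝ) : T1) = ((r : ℝ) : T1) + ((s : ℝ) : T1) :=
  (QuotientAddGroup.mk' (AddSubgroup.zmultiples (1:ℝ))).map_add r s

lemma stmt14_norm_coe (r : ℝ) : ‖(r : T1)‖ = |r - round r| := by
  rw [AddCircle.norm_eq]; norm_num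

lemma stmt14_coe_sub_round (r : ℝ) : ((r - round r : ℝ) : T1) = (r : T1) := by
  have : ((r - round r : ℝ) : T1) = (r : T1) - ((round r : ℝ) : T1) :=
    (QuotientAddGroup.mk' (AddSubgroup.zmultiples (1:ℝ))).map_sub r (round r)
  rw [this, stmt14_coe_int_eq_zero, sub_zero]

lemma stmt14_norm_coe_le (r : ℝ) : ‖(r : T1)‖ ≤ |r| := by
  rcases le_or_gt (|r|) (1/2) with h | h
  · rw [(AddCircle.norm_coe_eq_abs_iff (1:ℝ) one_ne_zero).2 (by simpa using h)]
  · calc ‖(r : T1)‖ ≤ |(1:ℝ)|/2 := AddCircle.norm_le_half_period _ one_ne_zero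
    _ ≤ |r| := by rw [abs_one]; linarith

lemma stmt14_norm_coe_eq {r : ℝ} (h : |r| ≤ 1/2) : ‖(r : T1)‖ = |r| :=
  (AddCircle.norm_coe_eq_abs_iff (1:ℝ) one_ne_zero).2 (by simpa using h)

lemma stmt14_zsmul_coe (m : ℤ) (r : ℝ) : m • ((r : ℝ) : T1) = ((m * r : ℝ) : T1) := by
  have : ((m * r : ℝ) : T1) = ((m • r : ℝ) : T1) := by norm_num
  rw [this]
  exact ((QuotientAddGroup.mk' (AddSubgroup.zmultiples (1:ℝ))).map_zsmul m r).symm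

lemma stmt14_norm_zsmul_le (m : ℤ) (ξ : T1) : ‖m • ξ‖ ≤ |(m : ℝ)| * ‖ξ‖ := by
  induction ξ using QuotientAddGroup.induction_on with
  | _ r =>
    set r' := r - round r with hr'
    have h1 : ((r' : ℝ) : T1) = (r : T1) := stmt14_coe_sub_round r
    have h2 : ‖(r : T1)‖ = |r'| := stmt14_norm_coe r
    calc ‖m • ((r : ℝ) : T1)‖ = ‖((m * r' : ℝ) : T1)‖ := by rw [← h1, stmt14_zsmul_coe]
    _ ≤ |m * r'| := stmt14_norm_coe_le _
    _ = |(m:ℝ)| * ‖(r : T1)‖ := by rw [abs_mul, h2]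

lemma stmt14_nss (ξ : T1) (h : ∀ m : ℤ, ‖m • ξ‖ < 1/4) : ξ = 0 := by
  by_contra hne
  obtain ⟨r, hr, hrn⟩ : ∃ r : ℝ, (r : T1) = ξ ∧ ‖ξ‖ = |r| := by
    induction ξ using QuotientAddGroup.induction_on with
    | _ r => exact ⟨r - round r, stmt14_coe_sub_round r, stmt14_norm_coe r⟩
  set a := ‖ξ‖ with ha
  have ha0 : 0 < a := norm_pos_iff.2 hne
  have ha4 : a < 1/4 := by simpa using h 1
  set k : ℤ := ⌊1/(4*a)⌋ + 1 with hk
  have hk1 : (1:ℤ) ≤ k := by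
    have : (0:ℤ) ≤ ⌊1/(4*a)⌋ := Int.floor_nonneg.2 (by positivity)
    omega
  have hka : 1/4 < (k:ℝ) * a := by
    have h1 : 1/(4*a) < (k:ℝ) := by rw [hk]; push_cast; exact Int.lt_floor_add_one _
    calc 1/4 = (1/(4*a)) * a := by field_simp
    _ < (k:ℝ) * a := by exact mul_lt_mul_of_pos_right h1 ha0
  have hka2 : (k:ℝ) * a ≤ 1/4 + a := by
    have h1 : ((k:ℝ) - 1) ≤ 1/(4*a) := by
      rw [hk]; push_cast; simpa using Int.floor_le (1/(4*a))
    have : ((k:ℝ) - 1) * a ≤ 1/4 := by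
      calc ((k:ℝ) - 1) * a ≤ (1/(4*a)) * a := mul_le_mul_of_nonneg_right h1 ha0.le
      _ = 1/4 := by field_simp
    nlinarith
  set m : ℤ := if 0 ≤ r then k else -k with hm
  have hmr : (m : ℝ) * r = (k:ℝ) * a := by
    rcases le_or_gt 0 r with hr0 | hr0
    · have har : a = r := by rw [hrn, abs_of_nonneg hr0]
      rw [hm, if_pos hr0, har]
    · have har : a = -r := by rw [hrn, abs_of_neg hr0]
      rw [hm, if_neg (not_le.2 hr0)]; push_cast; rw [har]; ring
  have hnorm : ‖m • ξ‖ = (k:ℝ) * a := by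
    rw [← hr, stmt14_zsmul_coe, hmr, stmt14_norm_coe_eq (by rw [abs_of_nonneg (by positivity)]; linarith),
      abs_of_nonneg (by positivity)]
  have := h m
  rw [hnorm] at this
  linarith
variable {d : ℕ}

/-- The character of the torus attached to an integer vector. -/
def stmt14_chi (n : Fin d → ℤ) : (Fin d → T1) →+ T1 :=
  AddMonoidHom.mk' (fun x => ∑ i, n i • x i) (by
    intro a b
    rw [← Finset.sum_add_distrib]
    exact Finset.sum_congr rfl (fun i _ => by simp [smul_add]))

lemma stmt14_chi_apply (n : Fin d → ℤ) (x : Fin d → T1) :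
    stmt14_chi n x = ∑ i, n i • x i := rfl

/-- The projection from `ℝ^d` to the torus. -/
def stmt14_p : (Fin d → ℝ) →+ (Fin d → T1) :=
  AddMonoidHom.mk' (fun x i => (x i : T1)) (by
    intro a b; funext i
    exact (QuotientAddGroup.mk' (AddSubgroup.zmultiples (1:ℝ))).map_add (a i) (b i))

lemma stmt14_p_apply (x : Fin d → ℝ) (i : Fin d) : stmt14_p x i = (x i : T1) := rfl

lemma stmt14_p_continuous : Continuous (stmt14_p (d := d)) :=
  continuous_pi fun i => (AddCircle.continuous_mk' (1:ℝ)).comp (continuous_apply i)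

lemma stmt14_p_surjective : Function.Surjective (stmt14_p (d := d)) := by
  intro x
  have : ∀ i, ∃ r : ℝ, (r : T1) = x i := fun i => QuotientAddGroup.mk'_surjective _ (x i)
  exact ⟨fun i => (this i).choose, funext fun i => (this i).choose_spec⟩

lemma stmt14_chi_p (n : Fin d → ℤ) (x : Fin d → ℝ) :
    stmt14_chi n (stmt14_p x) = ((∑ i, (n i : ℝ) * x i : ℝ) : T1) := by
  rw [stmt14_chi_apply]
  calc ∑ i, n i • stmt14_p x i = ∑ i, (((n i : ℝ) * x i : ℝ) : T1) :=
        Finset.sum_congr rfl (fun i _ => by rw [stmt14_p_apply, stmt14_zsmul_coe])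
  _ = ((∑ i, (n i : ℝ) * x i : ℝ) : T1) :=
        (map_sum (QuotientAddGroup.mk' (AddSubgroup.zmultiples (1:ℝ)))
          (fun i => (n i : ℝ) * x i) Finset.univ).symm

lemma stmt14_chi_lipschitz (n : Fin d → ℤ) (x y : Fin d → T1) :
    ‖stmt14_chi n x - stmt14_chi n y‖ ≤ (∑ i, |(n i : ℝ)|) * dist x y := by
  rw [← map_sub, stmt14_chi_apply]
  calc ‖∑ i, n i • (x - y) i‖ ≤ ∑ i, ‖n i • (x - y) i‖ := norm_sum_le _ _
  _ ≤ ∑ i, |(n i : ℝ)| * dist x y := by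
      refine Finset.sum_le_sum fun i _ => ?_
      calc ‖n i • (x - y) i‖ ≤ |(n i : ℝ)| * ‖(x - y) i‖ := stmt14_norm_zsmul_le _ _
      _ = |(n i : ℝ)| * dist (x i) (y i) := by rw [Pi.sub_apply, dist_eq_norm]
      _ ≤ |(n i : ℝ)| * dist x y :=
          mul_le_mul_of_nonneg_left (dist_le_pi_dist x y i) (abs_nonneg _)
  _ = (∑ i, |(n i : ℝ)|) * dist x y := by rw [Finset.sum_mul]
lemma stmt14_basis_vec_mem (G : AddSubgroup (Fin d → ℝ))
    (hGint : ∀ m : Fin d → ℤ, (fun i => (m i : ℝ)) ∈ G) (i : Fin d) :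
    (fun j => if i = j then (1:ℝ) else 0) ∈ G := by
  have := hGint (fun j => if i = j then (1:ℤ) else 0)
  convert this using 1
  funext j
  by_cases h : i = j <;> simp [h]

lemma stmt14_separation (G : AddSubgroup (Fin d → ℝ))
    (hGc : IsClosed (G : Set (Fin d → ℝ)))
    (hGint : ∀ m : Fin d → ℤ, (fun i => (m i : ℝ)) ∈ G)
    {x : Fin d → ℝ} (hx : x ∉ G) :
    ∃ n : Fin d → ℤ, (∀ g ∈ G, ∃ m : ℤ, ∑ i, (n i : ℝ) * g i = (m : ℝ)) ∧
      ¬ ∃ m : ℤ, ∑ i, (n i : ℝ) * x i = (m : ℝ) := by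
  classical
  -- the linear part of `G`
  set V : Submodule ℝ (Fin d → ℝ) :=
    { carrier := {y | ∀ t : ℝ, t • y ∈ G}
      add_mem' := fun ha hb t => by rw [smul_add]; exact G.add_mem (ha t) (hb t)
      zero_mem' := fun t => by rw [smul_zero]; exact G.zero_mem
      smul_mem' := fun c y hy t => by rw [smul_smul]; exact hy (t * c) } with hV
  have hVmem : ∀ y, y ∈ V ↔ ∀ t : ℝ, t • y ∈ G := fun y => Iff.rfl
  have hVG : ∀ v ∈ V, v ∈ G := fun v hv => by simpa using ((hVmem v).1 hv) 1
  obtain ⟨W, hWc⟩ := Submodule.exists_isCompl V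
  set Pv := V.projectionOnto W hWc with hPv
  set Pw := W.projectionOnto V hWc.symm with hPw
  have hdec : ∀ y : Fin d → ℝ, (Pv y : Fin d → ℝ) + (Pw y : Fin d → ℝ) = y := by
    intro y
    rw [hPv, hPw, ← Submodule.projection_apply, ← Submodule.projection_apply]
    exact Submodule.projection_add_projection_eq_self hWc y
  have hPwG : ∀ g ∈ G, (Pw g : Fin d → ℝ) ∈ G := by
    intro g hg
    have : (Pw g : Fin d → ℝ) = g - (Pv g : Fin d → ℝ) := by
      rw [eq_sub_iff_add_eq, add_comm]; exact hdec g
    rw [this]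
    exact G.sub_mem hg (hVG _ (Pv g).2)
  -- the discrete part of `G`
  set D : Submodule ℤ ↥W :=
    { carrier := {w : ↥W | (w : Fin d → ℝ) ∈ G}
      add_mem' := fun ha hb => G.add_mem ha hb
      zero_mem' := G.zero_mem
      smul_mem' := fun m w hw => by
        show ((m • w : ↥W) : Fin d → ℝ) ∈ G
        have : ((m • w : ↥W) : Fin d → ℝ) = m • (w : Fin d → ℝ) := rfl
        rw [this]
        exact AddSubgroup.zsmul_mem G hw m } with hD
  have hDmem : ∀ w : ↥W, w ∈ D ↔ (w : Fin d → ℝ) ∈ G := fun w => Iff.rfl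
  -- discreteness of `D`
  have hdisc : ∃ ε > 0, ∀ w : ↥W, (w : Fin d → ℝ) ∈ G → ‖w‖ < ε → w = 0 := by
    by_contra hcon
    push_neg at hcon
    have hseq : ∀ k : ℕ, ∃ w : ↥W, (w : Fin d → ℝ) ∈ G ∧ ‖w‖ < 1/(k+1) ∧ w ≠ 0 := by
      intro k
      obtain ⟨w, h1, h2, h3⟩ := hcon (1/(k+1)) (by positivity)
      exact ⟨w, h1, h2, h3⟩
    choose w hwG hwn hw0 using hseq
    set a : ℕ → ℝ := fun k => ‖(w k : Fin d → ℝ)‖ with ha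
    have ha0 : ∀ k, 0 < a k := by
      intro k
      have : (w k : Fin d → ℝ) ≠ 0 := fun h => hw0 k (by ext1; simp [h])
      exact norm_pos_iff.2 this
    have han : ∀ k, a k < 1/(k+1) := fun k => hwn k
    set u : ℕ → (Fin d → ℝ) := fun k => (a k)⁻¹ • (w k : Fin d → ℝ) with hu
    have hus : ∀ k, u k ∈ Metric.sphere (0 : Fin d → ℝ) 1 := by
      intro k
      rw [mem_sphere_iff_norm, sub_zero]
      show ‖(a k)⁻¹ • (w k : Fin d → ℝ)‖ = 1
      rw [norm_smul, norm_inv, Real.norm_eq_abs, abs_of_pos (ha0 k)]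
      exact inv_mul_cancel₀ (ha0 k).ne'
    obtain ⟨ul, huls, φ, hφ, hconv⟩ :=
      (isCompact_sphere (0 : Fin d → ℝ) 1).tendsto_subseq hus
    have hulW : ul ∈ W := by
      refine W.closed_of_finiteDimensional.mem_of_tendsto hconv ?_
      filter_upwards with k
      exact W.smul_mem _ (w (φ k)).2
    have hulV : ul ∈ V := by
      rw [hVmem]
      intro t
      set y : ℕ → (Fin d → ℝ) := fun k => ⌊t / a (φ k)⌋ • (w (φ k) : Fin d → ℝ) with hy
      have hyG : ∀ k, y k ∈ G := fun k => AddSubgroup.zsmul_mem G (hwG (φ k)) _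
      have hyten : Filter.Tendsto y Filter.atTop (nhds (t • ul)) := by
        rw [tendsto_iff_dist_tendsto_zero]
        apply squeeze_zero (fun k => dist_nonneg)
          (g := fun k => a (φ k) + |t| * dist (u (φ k)) ul)
        · intro k
          have hwu : (w (φ k) : Fin d → ℝ) = a (φ k) • u (φ k) := by
            rw [hu, smul_smul, mul_inv_cancel₀ (ha0 (φ k)).ne', one_smul]
          calc dist (y k) (t • ul)
              ≤ dist (y k) (t • u (φ k)) + dist (t • u (φ k)) (t • ul) := dist_triangle _ _ _
            _ ≤ a (φ k) + |t| * dist (u (φ k)) ul := by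
                gcongr
                · have hye : y k - t • u (φ k)
                      = ((⌊t / a (φ k)⌋ : ℝ) * a (φ k) - t) • u (φ k) := by
                    show (⌊t / a (φ k)⌋ • (w (φ k) : Fin d → ℝ)) - t • u (φ k) = _
                    rw [hwu, ← Int.cast_smul_eq_zsmul ℝ, smul_smul, ← sub_smul]
                  rw [dist_eq_norm, hye, norm_smul]
                  have h1 : ‖u (φ k)‖ = 1 := by
                    have := hus (φ k); rwa [mem_sphere_iff_norm, sub_zero] at this
                  rw [h1, mul_one, Real.norm_eq_abs, abs_sub_comm,
                    abs_of_nonneg (Int.sub_floor_div_mul_nonneg t (ha0 (φ k)))]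
                  exact (Int.sub_floor_div_mul_lt t (ha0 (φ k))).le
                · exact le_of_eq (by rw [dist_smul₀, Real.norm_eq_abs])
        · have h1 : Filter.Tendsto (fun k => a (φ k)) Filter.atTop (nhds 0) := by
            apply squeeze_zero (fun k => (ha0 (φ k)).le)
              (g := fun k : ℕ => 1/((k:ℝ)+1))
            · intro k
              refine le_of_lt ?_
              calc a (φ k) < 1/((φ k : ℝ)+1) := han (φ k)
                _ ≤ 1/((k:ℝ)+1) := by
                    refine one_div_le_one_div_of_le (by positivity) ?_
                    have hk : (k:ℝ) ≤ (φ k : ℝ) := by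
                      exact_mod_cast (hφ.le_apply : k ≤ φ k)
                    linarith
            · exact tendsto_one_div_add_atTop_nhds_zero_nat
          have h2 : Filter.Tendsto (fun k => |t| * dist (u (φ k)) ul)
              Filter.atTop (nhds 0) := by
            have := (hconv.dist (tendsto_const_nhds (x := ul)))
            simp only [dist_self] at this
            simpa using this.const_mul |t|
          simpa using h1.add h2
      exact hGc.mem_of_tendsto hyten (Filter.Eventually.of_forall hyG)
    have : ul = 0 := (Submodule.disjoint_def.mp hWc.disjoint) ul hulV hulW
    rw [mem_sphere_iff_norm, sub_zero, this, norm_zero] at huls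
    norm_num at huls
  obtain ⟨ε, hε, hεsep⟩ := hdisc
  haveI hDdisc : DiscreteTopology ↥D := by
    apply discreteTopology_iff_isOpen_singleton.mpr
    intro z
    rw [Metric.isOpen_singleton_iff]
    refine ⟨ε, hε, fun y hy => ?_⟩
    have h1 : ((y : ↥W) - (z : ↥W)) = ((y - z : ↥D) : ↥W) := rfl
    have h2 : ‖(y : ↥W) - (z : ↥W)‖ < ε := by
      rw [← dist_eq_norm]
      exact hy
    have h3 : ((y - z : ↥D) : ↥W) = 0 := by
      refine hεsep _ ?_ (by rw [← h1]; exact h2)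
      exact (hDmem _).1 (y - z).2
    have h4 : (y - z : ↥D) = 0 := Subtype.ext h3
    exact sub_eq_zero.mp h4
  -- spanning
  have hGspan : Submodule.span ℝ (G : Set (Fin d → ℝ)) = ⊤ := by
    rw [eq_top_iff]
    intro y _
    rw [pi_eq_sum_univ y]
    exact Submodule.sum_mem _ fun i _ => Submodule.smul_mem _ _
      (Submodule.subset_span (stmt14_basis_vec_mem G hGint i))
  set DE : Set (Fin d → ℝ) := {z | z ∈ G ∧ z ∈ W} with hDE
  have hDEW : Submodule.span ℝ DE ≤ W := Submodule.span_le.2 fun z hz => hz.2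
  have htop : V ⊔ Submodule.span ℝ DE = ⊤ := by
    rw [eq_top_iff, ← hGspan]
    rw [Submodule.span_le]
    intro g hg
    have : g = (Pv g : Fin d → ℝ) + (Pw g : Fin d → ℝ) := (hdec g).symm
    rw [this]
    exact Submodule.add_mem _
      (Submodule.mem_sup_left (Pv g).2)
      (Submodule.mem_sup_right (Submodule.subset_span ⟨hPwG g hg, (Pw g).2⟩))
  haveI hDlat : IsZLattice ℝ D := by
    constructor
    rw [eq_top_iff]
    rintro ww -
    have h1 : (ww : Fin d → ℝ) ∈ V ⊔ Submodule.span ℝ DE := by rw [htop]; trivial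
    obtain ⟨v, hv, s, hs, hvs⟩ := Submodule.mem_sup.1 h1
    have hsW : s ∈ W := hDEW hs
    have hvW : v ∈ W := by
      have : v = (ww : Fin d → ℝ) - s := by rw [← hvs]; abel
      rw [this]
      exact W.sub_mem ww.2 hsW
    have hv0 : v = 0 := (Submodule.disjoint_def.mp hWc.disjoint) v hv hvW
    have hws : (ww : Fin d → ℝ) ∈ Submodule.span ℝ DE := by
      rw [← hvs, hv0, zero_add]; exact hs
    have hDEim : DE = W.subtype '' (D : Set ↥W) := by
      ext z
      constructor
      · rintro ⟨h1, h2⟩; exact ⟨⟨z, h2⟩, h1, rfl⟩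
      · rintro ⟨w', hw', rfl⟩; exact ⟨hw', w'.2⟩
    rw [hDEim, Submodule.span_image] at hws
    obtain ⟨w', hw', hw'e⟩ := hws
    have : w' = ww := Subtype.ext hw'e
    rwa [← this]
  haveI := ZLattice.module_finite ℝ D
  haveI := ZLattice.module_free ℝ D
  set b := Module.Free.chooseBasis ℤ ↥D with hb
  set B := Module.Basis.ofZLatticeBasis ℝ D b with hB
  have hint : ∀ (z : ↥D) i, B.repr (z : ↥W) i = ((b.repr z i : ℤ) : ℝ) := by
    intro z i
    rw [hB]
    exact Module.Basis.ofZLatticeBasis_repr_apply ℝ D b z i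
  -- the W-component of x has a non-integral coordinate
  set ww : ↥W := Pw x with hww
  have hxv : x - (ww : Fin d → ℝ) ∈ V := by
    have h : (Pv x : Fin d → ℝ) = x - (ww : Fin d → ℝ) := by
      rw [hww, eq_sub_iff_add_eq]
      exact hdec x
    rw [← h]; exact (Pv x).2
  have hwD : ww ∉ D := by
    intro hww'
    apply hx
    have : x = (x - (ww : Fin d → ℝ)) + (ww : Fin d → ℝ) := by abel
    rw [this]
    exact G.add_mem (hVG _ hxv) hww'
  have hex : ∃ i₀, ∀ m : ℤ, B.repr (ww : ↥W) i₀ ≠ (m : ℝ) := by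
    by_contra hcon
    push_neg at hcon
    choose m hm using hcon
    set z : ↥D := ∑ i, m i • b i with hz
    have hzr : ∀ j, b.repr z j = m j := by
      intro j
      rw [hz]
      exact congrFun (Module.Basis.repr_sum_self b m) j
    have hzw : ((z : ↥W)) = (ww : ↥W) := by
      apply B.repr.injective
      apply Finsupp.ext
      intro i
      rw [hint z i, hzr i]
      exact (hm i).symm
    exact hwD (by rw [← hzw]; exact z.2)
  obtain ⟨i₀, hi₀⟩ := hex
  -- the separating functional
  set F : (Fin d → ℝ) →ₗ[ℝ] ℝ := (B.coord i₀).comp Pw with hF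
  have hFG : ∀ g ∈ G, ∃ m : ℤ, F g = (m : ℝ) := by
    intro g hg
    have hPD : Pw g ∈ D := (hDmem _).2 (hPwG g hg)
    refine ⟨b.repr ⟨Pw g, hPD⟩ i₀, ?_⟩
    rw [hF]
    simp only [LinearMap.comp_apply, Module.Basis.coord_apply]
    exact hint ⟨Pw g, hPD⟩ i₀
  have hFx : ∀ m : ℤ, F x ≠ (m : ℝ) := by
    intro m
    rw [hF]
    simp only [LinearMap.comp_apply, Module.Basis.coord_apply]
    exact hi₀ m
  -- turn it into an integer vector
  set e : Fin d → (Fin d → ℝ) := fun i => (fun j => if i = j then (1:ℝ) else 0) with he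
  have heG : ∀ i, e i ∈ G := fun i => stmt14_basis_vec_mem G hGint i
  set n : Fin d → ℤ := fun i => (hFG (e i) (heG i)).choose with hn
  have hne : ∀ i, F (e i) = ((n i : ℤ) : ℝ) := fun i => (hFG (e i) (heG i)).choose_spec
  have hFsum : ∀ y : Fin d → ℝ, F y = ∑ i, (n i : ℝ) * y i := by
    intro y
    conv_lhs => rw [pi_eq_sum_univ y]
    rw [map_sum]
    exact Finset.sum_congr rfl fun i _ => by
      rw [map_smul, smul_eq_mul, hne i, mul_comm]
  refine ⟨n, fun g hg => ?_, fun ⟨m, hm⟩ => ?_⟩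
  · obtain ⟨m, hm⟩ := hFG g hg
    exact ⟨m, by rw [← hFsum]; exact hm⟩
  · exact hFx m (by rw [hFsum]; exact hm)
lemma stmt14_finite_kernels (K : AddSubgroup (Fin d → T1))
    (hKc : IsClosed (K : Set (Fin d → T1))) :
    ∃ s : Finset (Fin d → ℤ), ∀ x, x ∈ K ↔ ∀ n ∈ s, stmt14_chi n x = 0 := by
  classical
  set G : AddSubgroup (Fin d → ℝ) := K.comap stmt14_p with hG
  have hGc : IsClosed (G : Set (Fin d → ℝ)) := hKc.preimage stmt14_p_continuous
  have hGint : ∀ m : Fin d → ℤ, (fun i => (m i : ℝ)) ∈ G := by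
    intro m
    show stmt14_p (fun i => (m i : ℝ)) ∈ K
    have : stmt14_p (fun i => (m i : ℝ)) = 0 := by
      funext i
      exact stmt14_coe_int_eq_zero (m i)
    rw [this]
    exact K.zero_mem
  set Lam : Submodule ℤ (Fin d → ℤ) :=
    { carrier := {n | ∀ g ∈ G, ∃ m : ℤ, ∑ i, (n i : ℝ) * g i = (m : ℝ)}
      add_mem' := by
        rintro p q hp hq g hg
        obtain ⟨mp, hmp⟩ := hp g hg
        obtain ⟨mq, hmq⟩ := hq g hg
        refine ⟨mp + mq, ?_⟩
        push_cast
        rw [← hmp, ← hmq, ← Finset.sum_add_distrib]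
        exact Finset.sum_congr rfl fun i _ => by
          rw [Pi.add_apply]; push_cast; ring
      zero_mem' := fun g hg => ⟨0, by simp⟩
      smul_mem' := by
        rintro c n hn g hg
        obtain ⟨m, hm⟩ := hn g hg
        refine ⟨c * m, ?_⟩
        push_cast
        rw [← hm, Finset.mul_sum]
        exact Finset.sum_congr rfl fun i _ => by
          rw [Pi.smul_apply, smul_eq_mul]; push_cast; ring } with hLam
  obtain ⟨s, hs⟩ := IsNoetherian.noetherian Lam
  refine ⟨s, fun x => ⟨?_, ?_⟩⟩
  · intro hx n hn
    obtain ⟨y, rfl⟩ := stmt14_p_surjective x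
    have hy : y ∈ G := hx
    have hnL : n ∈ Lam := by rw [← hs]; exact Submodule.subset_span hn
    obtain ⟨m, hm⟩ := hnL y hy
    rw [stmt14_chi_p, hm]
    exact stmt14_coe_int_eq_zero m
  · intro hx
    obtain ⟨y, rfl⟩ := stmt14_p_surjective x
    show y ∈ G
    by_contra hyG
    obtain ⟨n, hn1, hn2⟩ := stmt14_separation G hGc hGint hyG
    set M : Submodule ℤ (Fin d → ℤ) :=
      { carrier := {n' | ((∑ i, (n' i : ℝ) * y i : ℝ) : T1) = 0}
        add_mem' := by
          rintro p q hp hq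
          show ((∑ i, ((p + q) i : ℝ) * y i : ℝ) : T1) = 0
          have he : (∑ i, ((p + q) i : ℝ) * y i)
              = (∑ i, (p i : ℝ) * y i) + (∑ i, (q i : ℝ) * y i) := by
            rw [← Finset.sum_add_distrib]
            exact Finset.sum_congr rfl fun i _ => by
              rw [Pi.add_apply]; push_cast; ring
          rw [he, stmt14_coe_add,
            show ((∑ i, (p i : ℝ) * y i : ℝ) : T1) = 0 from hp,
            show ((∑ i, (q i : ℝ) * y i : ℝ) : T1) = 0 from hq, add_zero]
        zero_mem' := by
          show ((∑ i, ((0 : Fin d → ℤ) i : ℝ) * y i : ℝ) : T1) = 0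
          norm_num
        smul_mem' := by
          rintro c n' hn'
          show ((∑ i, ((c • n') i : ℝ) * y i : ℝ) : T1) = 0
          have he : (∑ i, ((c • n') i : ℝ) * y i) = c * (∑ i, (n' i : ℝ) * y i) := by
            rw [Finset.mul_sum]
            exact Finset.sum_congr rfl fun i _ => by
              rw [Pi.smul_apply, smul_eq_mul]; push_cast; ring
          rw [he, ← stmt14_zsmul_coe,
            show ((∑ i, (n' i : ℝ) * y i : ℝ) : T1) = 0 from hn', smul_zero] } with hM
    have hsM : ∀ n' ∈ (s : Set (Fin d → ℤ)), n' ∈ M := by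
      intro n' hn'
      have := hx n' hn'
      rwa [stmt14_chi_p] at this
    have hLamM : Lam ≤ M := by
      rw [← hs]
      exact Submodule.span_le.2 hsM
    have hnM : n ∈ M := hLamM hn1
    have : ((∑ i, (n i : ℝ) * y i : ℝ) : T1) = 0 := hnM
    rw [AddCircle.coe_eq_zero_iff] at this
    obtain ⟨m, hm⟩ := this
    exact hn2 ⟨m, by rw [← hm]; simp⟩

lemma stmt14_rigid (K : AddSubgroup (Fin d → T1))
    (hKc : IsClosed (K : Set (Fin d → T1))) :
    ∃ δ > 0, ∀ L : AddSubgroup (Fin d → T1),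
      (L : Set (Fin d → T1)) ⊆ Metric.thickening δ (K : Set (Fin d → T1)) →
      (L : Set (Fin d → T1)) ⊆ (K : Set (Fin d → T1)) := by
  classical
  obtain ⟨s, hs⟩ := stmt14_finite_kernels K hKc
  set c : ℝ := (∑ n ∈ s, ∑ i, |(n i : ℝ)|) + 1 with hc
  have hc1 : 1 ≤ c := by
    rw [hc]
    have : (0:ℝ) ≤ ∑ n ∈ s, ∑ i, |(n i : ℝ)| :=
      Finset.sum_nonneg fun n _ => Finset.sum_nonneg fun i _ => abs_nonneg _
    linarith
  have hc0 : 0 < c := by linarith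
  have hcn : ∀ n ∈ s, (∑ i, |(n i : ℝ)|) ≤ c := by
    intro n hn
    rw [hc]
    have h1 : (∑ i, |(n i : ℝ)|) ≤ ∑ n ∈ s, ∑ i, |(n i : ℝ)| :=
      Finset.single_le_sum (f := fun n => ∑ i, |(n i : ℝ)|)
        (fun n _ => Finset.sum_nonneg fun i _ => abs_nonneg _) hn
    linarith
  refine ⟨1/(8*c), by positivity, fun L hL x hx => ?_⟩
  have hK : ∀ n ∈ s, stmt14_chi n x = 0 := by
    intro n hn
    apply stmt14_nss
    intro m
    have hml : m • x ∈ (L : Set (Fin d → T1)) := AddSubgroup.zsmul_mem L hx m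
    have := hL hml
    rw [Metric.mem_thickening_iff] at this
    obtain ⟨k, hk, hdk⟩ := this
    have hχk : stmt14_chi n k = 0 := (hs k).1 hk n hn
    have hrw : ‖m • stmt14_chi n x‖ = ‖stmt14_chi n (m • x) - stmt14_chi n k‖ := by
      rw [map_zsmul, hχk, sub_zero]
    rw [hrw]
    calc ‖stmt14_chi n (m • x) - stmt14_chi n k‖
        ≤ (∑ i, |(n i : ℝ)|) * dist (m • x) k := stmt14_chi_lipschitz n _ _
      _ ≤ c * (1/(8*c)) := by
          apply mul_le_mul (hcn n hn) hdk.le dist_nonneg hc0.le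
      _ = 1/8 := by field_simp
      _ < 1/4 := by norm_num
  exact (hs x).2 hK

/-- Ambro, Lawrence: let `R = ℝ^d/ℤ^d` be a real torus and `U ⊆ R` a
non-empty open subset.  The collection of closed subgroups of `R` disjoint from `U` has
only finitely many maximal elements with respect to inclusion. -/
theorem stmt14 (d : ℕ) (U : Set (Fin d → AddCircle (1 : ℝ)))
    (hUopen : IsOpen U) (hUne : U.Nonempty) :
    {H : AddSubgroup (Fin d → AddCircle (1 : ℝ)) |
      (IsClosed (H : Set (Fin d → AddCircle (1 : ℝ))) ∧
        Disjoint (H : Set (Fin d → AddCircle (1 : ℝ))) U) ∧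
      ∀ H' : AddSubgroup (Fin d → AddCircle (1 : ℝ)),
        IsClosed (H' : Set (Fin d → AddCircle (1 : ℝ))) →
        Disjoint (H' : Set (Fin d → AddCircle (1 : ℝ))) U → H ≤ H' → H' = H}.Finite := by
  classical
  set S := {H : AddSubgroup (Fin d → AddCircle (1 : ℝ)) |
      (IsClosed (H : Set (Fin d → AddCircle (1 : ℝ))) ∧
        Disjoint (H : Set (Fin d → AddCircle (1 : ℝ))) U) ∧
      ∀ H' : AddSubgroup (Fin d → AddCircle (1 : ℝ)),
        IsClosed (H' : Set (Fin d → AddCircle (1 : ℝ))) →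
        Disjoint (H' : Set (Fin d → AddCircle (1 : ℝ))) U → H ≤ H' → H' = H} with hSdef
  by_contra hfin
  have hinf : S.Infinite := hfin
  set e := hinf.natEmbedding with he
  -- the sequence of compact subgroups
  set HH : ℕ → AddSubgroup (Fin d → T1) := fun k => (e k : AddSubgroup (Fin d → T1)) with hHH
  have hHHS : ∀ k, HH k ∈ S := fun k => (e k).2
  have hHHinj : Function.Injective HH := fun k l hkl => by
    have : e k = e l := Subtype.ext hkl
    exact e.injective this
  set Q : ℕ → NonemptyCompacts (Fin d → T1) := fun k =>
    ⟨⟨(HH k : Set (Fin d → T1)), (hHHS k).1.1.isCompact⟩, ⟨0, AddSubgroup.zero_mem _⟩⟩ with hQ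
  have hQcoe : ∀ k, (Q k : Set (Fin d → T1)) = (HH k : Set (Fin d → T1)) := fun k => rfl
  obtain ⟨Kc, -, φ, hφ, hconv⟩ := isCompact_univ.tendsto_subseq (x := Q) (fun k => Set.mem_univ _)
  set A : Set (Fin d → T1) := (Kc : Set (Fin d → T1)) with hA
  have hAne : A.Nonempty := Kc.nonempty
  have hAcl : IsClosed A := Kc.isCompact.isClosed
  have hAbd : Bornology.IsBounded A := Kc.isCompact.isBounded
  have hedist : ∀ k, EMetric.hausdorffEdist (Q (φ k) : Set (Fin d → T1)) A ≠ ⊤ := fun k =>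
    Metric.hausdorffEdist_ne_top_of_nonempty_of_bounded (Q (φ k)).nonempty hAne
      (Q (φ k)).isCompact.isBounded hAbd
  have hdist : ∀ k, dist (Q (φ k)) Kc = Metric.hausdorffDist (Q (φ k) : Set (Fin d → T1)) A := by
    intro k
    rfl
  have hdconv : Filter.Tendsto
      (fun k => Metric.hausdorffDist (Q (φ k) : Set (Fin d → T1)) A)
      Filter.atTop (nhds 0) := by
    have h1 := tendsto_iff_dist_tendsto_zero.mp hconv
    simpa only [Function.comp, hdist] using h1
  -- limit membership criterion
  have hlimmem : ∀ (y : ℕ → Fin d → T1) (x : Fin d → T1),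
      (∀ k, y k ∈ HH (φ k)) → Filter.Tendsto y Filter.atTop (nhds x) → x ∈ A := by
    intro y x hy hten
    have hle : ∀ k, Metric.infDist x A ≤ dist x (y k)
        + Metric.hausdorffDist (Q (φ k) : Set (Fin d → T1)) A := by
      intro k
      calc Metric.infDist x A ≤ Metric.infDist (y k) A + dist x (y k) :=
            Metric.infDist_le_infDist_add_dist
        _ ≤ Metric.hausdorffDist (Q (φ k) : Set (Fin d → T1)) A + dist x (y k) := by
            gcongr
            exact Metric.infDist_le_hausdorffDist_of_mem (hy k) (hedist k)
        _ = dist x (y k) + Metric.hausdorffDist (Q (φ k) : Set (Fin d → T1)) A := by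
            ring
    have hten0 : Filter.Tendsto
        (fun k => dist x (y k) + Metric.hausdorffDist (Q (φ k) : Set (Fin d → T1)) A)
        Filter.atTop (nhds 0) := by
      have h1 : Filter.Tendsto (fun k => dist x (y k)) Filter.atTop (nhds 0) := by
        have := (tendsto_const_nhds (x := x) (f := Filter.atTop (α := ℕ))).dist hten
        simpa using this
      simpa using h1.add hdconv
    have : Metric.infDist x A ≤ 0 := ge_of_tendsto' hten0 hle
    have h0 : Metric.infDist x A = 0 := le_antisymm this Metric.infDist_nonneg
    exact (hAcl.mem_iff_infDist_zero hAne).2 h0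
  -- approximating sequences
  have happrox : ∀ x ∈ A, ∃ y : ℕ → Fin d → T1,
      (∀ k, y k ∈ HH (φ k)) ∧ Filter.Tendsto y Filter.atTop (nhds x) := by
    intro x hx
    have hex : ∀ k : ℕ, ∃ z, z ∈ HH (φ k) ∧ dist x z <
        Metric.hausdorffDist A (Q (φ k) : Set (Fin d → T1)) + 1/(k+1) := by
      intro k
      have h1 : Metric.hausdorffDist A (Q (φ k) : Set (Fin d → T1))
          < Metric.hausdorffDist A (Q (φ k) : Set (Fin d → T1)) + 1/(k+1) := by
        have : (0:ℝ) < 1/(k+1) := by positivity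
        linarith
      obtain ⟨z, hz1, hz2⟩ := Metric.exists_dist_lt_of_hausdorffDist_lt hx h1
        (by rw [EMetric.hausdorffEdist_comm]; exact hedist k)
      exact ⟨z, hz1, hz2⟩
    choose y hy1 hy2 using hex
    refine ⟨y, hy1, ?_⟩
    rw [tendsto_iff_dist_tendsto_zero]
    apply squeeze_zero (fun k => dist_nonneg)
      (g := fun k => Metric.hausdorffDist A (Q (φ k) : Set (Fin d → T1)) + 1/((k:ℝ)+1))
    · exact fun k => by rw [dist_comm]; exact (hy2 k).le
    · have h1 : Filter.Tendsto
          (fun k => Metric.hausdorffDist A (Q (φ k) : Set (Fin d → T1)))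
          Filter.atTop (nhds 0) := by
        have : (fun k => Metric.hausdorffDist A (Q (φ k) : Set (Fin d → T1)))
            = fun k => Metric.hausdorffDist (Q (φ k) : Set (Fin d → T1)) A := by
          funext k
          rw [Metric.hausdorffDist_comm]
        rw [this]
        exact hdconv
      have h2 := tendsto_one_div_add_atTop_nhds_zero_nat (𝕜 := ℝ)
      simpa using h1.add h2
  -- A is a subgroup
  have hzeroA : (0 : Fin d → T1) ∈ A :=
    hlimmem (fun _ => 0) 0 (fun k => AddSubgroup.zero_mem _) tendsto_const_nhds
  have haddA : ∀ x ∈ A, ∀ z ∈ A, x + z ∈ A := by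
    intro x hx z hz
    obtain ⟨y1, hy11, hy12⟩ := happrox x hx
    obtain ⟨y2, hy21, hy22⟩ := happrox z hz
    exact hlimmem (fun k => y1 k + y2 k) (x + z)
      (fun k => AddSubgroup.add_mem _ (hy11 k) (hy21 k)) (hy12.add hy22)
  have hnegA : ∀ x ∈ A, -x ∈ A := by
    intro x hx
    obtain ⟨y1, hy11, hy12⟩ := happrox x hx
    exact hlimmem (fun k => -(y1 k)) (-x)
      (fun k => AddSubgroup.neg_mem _ (hy11 k)) hy12.neg
  set KA : AddSubgroup (Fin d → T1) :=
    { carrier := A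
      add_mem' := fun hx hz => haddA _ hx _ hz
      zero_mem' := hzeroA
      neg_mem' := fun hx => hnegA _ hx } with hKA
  have hKAcoe : (KA : Set (Fin d → T1)) = A := rfl
  -- A is disjoint from U
  have hAdisj : Disjoint A U := by
    rw [Set.disjoint_left]
    intro x hx hxU
    obtain ⟨y, hy1, hy2⟩ := happrox x hx
    have : ∀ᶠ k in Filter.atTop, y k ∈ U := hy2.eventually (hUopen.mem_nhds hxU)
    obtain ⟨k, hk⟩ := this.exists
    exact Set.disjoint_left.mp (hHHS (φ k)).1.2 (hy1 k) hk
  -- rigidity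
  obtain ⟨δ, hδ, hrig⟩ := stmt14_rigid KA hAcl
  have hev : ∀ᶠ k in Filter.atTop,
      Metric.hausdorffDist (Q (φ k) : Set (Fin d → T1)) A < δ := by
    have := hdconv.eventually (eventually_lt_nhds hδ)
    simpa using this
  obtain ⟨N, hN⟩ := hev.exists_forall_of_atTop
  have hsub : ∀ k, N ≤ k → HH (φ k) = KA := by
    intro k hk
    have hthick : (HH (φ k) : Set (Fin d → T1)) ⊆ Metric.thickening δ A := by
      intro z hz
      rw [Metric.mem_thickening_iff_infDist_lt hAne]
      calc Metric.infDist z A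
          ≤ Metric.hausdorffDist (Q (φ k) : Set (Fin d → T1)) A :=
            Metric.infDist_le_hausdorffDist_of_mem hz (hedist k)
        _ < δ := hN k hk
    have hle : HH (φ k) ≤ KA := hrig (HH (φ k)) hthick
    exact ((hHHS (φ k)).2 KA hAcl hAdisj hle).symm
  have h1 : HH (φ N) = HH (φ (N+1)) := by
    rw [hsub N le_rfl, hsub (N+1) (by omega)]
  have := hHHinj h1
  exact absurd (hφ.injective this) (by omega)
end
end

section
/- Let σ ⊆ N_ℝ be a rational simplicial cone, W ⊆ N_ℂ a subspace, and suppose that for some t ∈ [0,1] and every primitive v ∈ σ ∩ N one has t·φ_{K_F}(v) + (1-t)·φ_{K_X}(v) ≥ (1 - t + ι(v)t)δ, where ι(v) = 1 iff v ∈ W. Define S = {v ∈ σ ∩ N primitive : ι(v) = 0 and δ > φ_{K_X}(v)} (a finite set) and L = max{0, max_{v∈S} (δ - φ_{K_X}(v)) / (δ - (φ_{K_X}(v) - φ_{K_F}(v)))}. Then the infimum of all t ∈ [0,1] for which the above family of inequalities holds for all primitive v ∈ σ ∩ N equals L, i.e., δ-\underline{LCT}(U_σ, F_W) = L. -/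
open scoped BigOperators Classical

noncomputable section

/-- computation of the interpolated `δ`-lct on an affine toric chart:
let `σ = Cone(v₁,…,v_m) ⊆ N_ℝ` be a rational simplicial cone, `W ⊆ N_ℂ` a subspace, and
`φ_{K_X}, φ_{K_F}` the (linear) support functions with `φ_{K_X}(v_j) = 1` and
`φ_{K_F}(v_j) = 1` iff `v_j ∈ W` (else `0`).  Suppose for some `t ∈ [0,1]` every
primitive `v ∈ σ ∩ N` satisfies `t·φ_{K_F}(v) + (1-t)·φ_{K_X}(v) ≥ (1-t+ι(v)t)δ`.  Then
`S = {v ∈ σ ∩ N primitive : v ∉ W, δ > φ_{K_X}(v)}` is finite and the infimum of all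
`t ∈ [0,1]` for which the family of inequalities holds, i.e.
`δ-LCT(U_σ, F_W)`, equals `L = max(0, sup_{v∈S} (δ-φ_{K_X}(v))/(δ-(φ_{K_X}(v)-φ_{K_F}(v))))`. -/
theorem stmt17 {n m : ℕ} (gens : Fin m → V n)
    (hindep : LinearIndependent ℝ gens) (hprim : ∀ j, IsPrimVec (gens j))
    (W : Submodule ℂ (Fin n → ℂ))
    (φX φF : V n →ₗ[ℝ] ℝ)
    (hφX : ∀ j, φX (gens j) = 1)
    (hφF : ∀ j, φF (gens j) = if toC (gens j) ∈ W then 1 else 0)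
    (δ : ℝ) (hδ : 0 < δ)
    (hlc : ∃ t ∈ Set.Icc (0 : ℝ) 1, ∀ v : V n, IsPrimVec v →
      v ∈ coneSpan (Set.range gens) →
      t * φF v + (1 - t) * φX v ≥ (1 - t + (if toC v ∈ W then t else 0)) * δ) :
    {v : V n | IsPrimVec v ∧ v ∈ coneSpan (Set.range gens) ∧ toC v ∉ W ∧
        φX v < δ}.Finite ∧
    sInf {t : ℝ | t ∈ Set.Icc (0 : ℝ) 1 ∧ ∀ v : V n, IsPrimVec v →
        v ∈ coneSpan (Set.range gens) →
        t * φF v + (1 - t) * φX v ≥ (1 - t + (if toC v ∈ W then t else 0)) * δ} =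
      max 0 (sSup {r : ℝ | ∃ v : V n, IsPrimVec v ∧ v ∈ coneSpan (Set.range gens) ∧
        toC v ∉ W ∧ φX v < δ ∧ r = (δ - φX v) / (δ - (φX v - φF v))}) := by
  obtain ⟨t₀, ⟨ht₀0, ht₀1⟩, ht₀⟩ := hlc
  set M : ℝ := ∑ j : Fin m, ∑ l : Fin n, |gens j l| with hMdef
  have hM0 : 0 ≤ M := Finset.sum_nonneg fun j _ => Finset.sum_nonneg fun l _ => abs_nonneg _
  -- basic properties of cone elements
  have coneP : ∀ v ∈ coneSpan (Set.range gens),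
      0 ≤ φF v ∧ φF v ≤ φX v ∧ ∀ l, |v l| ≤ φX v * M := by
    rintro v ⟨k, c, g, hc, hg, rfl⟩
    have hXg : ∀ i, φX (g i) = 1 := by
      intro i; obtain ⟨j, hj⟩ := hg i; rw [← hj, hφX]
    have hFg : ∀ i, 0 ≤ φF (g i) ∧ φF (g i) ≤ 1 := by
      intro i; obtain ⟨j, hj⟩ := hg i
      rw [← hj, hφF]; split <;> norm_num
    have hgM : ∀ i l, |g i l| ≤ M := by
      intro i l; obtain ⟨j, hj⟩ := hg i
      rw [← hj]
      calc |gens j l| ≤ ∑ l' : Fin n, |gens j l'| :=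
            Finset.single_le_sum (f := fun l' => |gens j l'|) (fun l' _ => abs_nonneg _) (Finset.mem_univ l)
        _ ≤ M := Finset.single_le_sum (f := fun j' => ∑ l' : Fin n, |gens j' l'|)
            (fun j' _ => Finset.sum_nonneg fun l' _ => abs_nonneg _) (Finset.mem_univ j)
    have hX : φX (∑ i, c i • g i) = ∑ i, c i := by
      rw [map_sum]; simp [hXg]
    have hF : φF (∑ i, c i • g i) = ∑ i, c i * φF (g i) := by
      rw [map_sum]; simp
    refine ⟨?_, ?_, ?_⟩
    · rw [hF]
      exact Finset.sum_nonneg fun i _ => mul_nonneg (hc i) (hFg i).1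
    · rw [hF, hX]
      exact Finset.sum_le_sum fun i _ => by
        have := (hFg i).2; nlinarith [hc i]
    · intro l
      rw [hX]
      have : (∑ i, c i • g i) l = ∑ i, c i * g i l := by
        simp [Finset.sum_apply]
      rw [this, Finset.sum_mul]
      calc |∑ i, c i * g i l| ≤ ∑ i, |c i * g i l| := Finset.abs_sum_le_sum_abs _ _
        _ ≤ ∑ i, c i * M := Finset.sum_le_sum fun i _ => by
            rw [abs_mul, abs_of_nonneg (hc i)]
            exact mul_le_mul_of_nonneg_left (hgM i l) (hc i)
  -- finiteness
  have hfin : {v : V n | IsPrimVec v ∧ v ∈ coneSpan (Set.range gens) ∧ toC v ∉ W ∧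
      φX v < δ}.Finite := by
    have hsub : {v : V n | IsPrimVec v ∧ v ∈ coneSpan (Set.range gens) ∧ toC v ∉ W ∧
        φX v < δ} ⊆ (fun w : Fin n → ℤ => (fun i => (w i : ℝ))) ''
        (Set.univ.pi fun _ : Fin n => Set.Icc (⌈-(δ * M)⌉) ⌊δ * M⌋) := by
      rintro v ⟨⟨w, rfl, -⟩, hvc, -, hvX⟩
      refine ⟨w, fun l _ => ?_, rfl⟩
      have hb := (coneP _ hvc).2.2 l
      have h2 : φX (fun i => (w i : ℝ)) * M ≤ δ * M :=
        mul_le_mul_of_nonneg_right hvX.le hM0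
      have hb' : |(w l : ℝ)| ≤ δ * M := le_trans hb h2
      rw [abs_le] at hb'
      constructor
      · rw [Int.ceil_le]; push_cast; linarith [hb'.1]
      · rw [Int.le_floor]; exact hb'.2
    exact ((Set.Finite.pi fun _ => Set.finite_Icc _ _).image _).subset hsub
  refine ⟨hfin, ?_⟩
  set RS : Set ℝ := {r : ℝ | ∃ v : V n, IsPrimVec v ∧ v ∈ coneSpan (Set.range gens) ∧
        toC v ∉ W ∧ φX v < δ ∧ r = (δ - φX v) / (δ - (φX v - φF v))} with hRSdef
  set T : Set ℝ := {t : ℝ | t ∈ Set.Icc (0 : ℝ) 1 ∧ ∀ v : V n, IsPrimVec v →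
        v ∈ coneSpan (Set.range gens) →
        t * φF v + (1 - t) * φX v ≥ (1 - t + (if toC v ∈ W then t else 0)) * δ} with hTdef
  -- every element of T dominates every ratio
  have hdom : ∀ t ∈ T, ∀ r ∈ RS, r ≤ t := by
    rintro t ⟨⟨ht0, _⟩, ht⟩ r ⟨v, hvp, hvc, hvW, hvX, rfl⟩
    have hA0 := (coneP v hvc).1
    have hden : 0 < δ - (φX v - φF v) := by linarith
    have hv := ht v hvp hvc
    rw [if_neg hvW] at hv
    rw [div_le_iff₀ hden]
    nlinarith [hv]
  have ht₀T : t₀ ∈ T := ⟨⟨ht₀0, ht₀1⟩, ht₀⟩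
  have hbdd : BddAbove RS := ⟨t₀, fun r hr => hdom t₀ ht₀T r hr⟩
  set L : ℝ := max 0 (sSup RS) with hLdef
  have hLt₀ : L ≤ t₀ := by
    apply max_le ht₀0
    exact Real.sSup_le (fun r hr => hdom t₀ ht₀T r hr) ht₀0
  have hL0 : 0 ≤ L := le_max_left _ _
  -- L belongs to T
  have hLT : L ∈ T := by
    refine ⟨⟨hL0, le_trans hLt₀ ht₀1⟩, ?_⟩
    intro v hvp hvc
    obtain ⟨hA0, hAX, -⟩ := coneP v hvc
    have hv := ht₀ v hvp hvc
    by_cases hW : toC v ∈ W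
    · rw [if_pos hW] at hv ⊢
      nlinarith [mul_le_mul_of_nonneg_right hLt₀ (sub_nonneg.2 hAX)]
    · rw [if_neg hW] at hv ⊢
      by_cases hX : φX v < δ
      · have hr : (δ - φX v) / (δ - (φX v - φF v)) ∈ RS := ⟨v, hvp, hvc, hW, hX, rfl⟩
        have hden : 0 < δ - (φX v - φF v) := by linarith
        have hrL : (δ - φX v) / (δ - (φX v - φF v)) ≤ L :=
          le_trans (le_csSup hbdd hr) (le_max_right _ _)
        rw [div_le_iff₀ hden] at hrL
        nlinarith
      · push_neg at hX
        by_cases hcs : 0 ≤ δ - φX v + φF v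
        · nlinarith [mul_nonneg hL0 hcs]
        · push_neg at hcs
          have : t₀ * (δ - φX v + φF v) ≤ L * (δ - φX v + φF v) :=
            mul_le_mul_of_nonpos_right hLt₀ hcs.le
          nlinarith
  -- conclusion
  refine le_antisymm (csInf_le ⟨0, fun t ht => ht.1.1⟩ hLT) (le_csInf ⟨L, hLT⟩ ?_)
  intro t htT
  exact max_le htT.1.1 (Real.sSup_le (fun r hr => hdom t htT r hr) htT.1.1)
end
end

section
/- In the setting of the δ-lct classification: let σ = Cone(v₁,…,v_m) be simplicial with primitive generators, W ⊆ N_ℂ, and suppose the maximum L > 0 is achieved at ṽ ∈ S with ṽ = x₁v₁ + ⋯ + x_s v_s, x_i > 0, where {v₁,…,v_s} ∩ W = {v₁,…,v_ℓ}. If x_k ≥ 1 for some k ≤ ℓ, then v' = ṽ - v_k is a lattice point of σ not in W with φ_{K_X}(v') - φ_{K_F}(v') = φ_{K_X}(ṽ) - φ_{K_F}(ṽ) < δ and (δ - φ_{K_X}(v'))/(δ - (φ_{K_X}(v') - φ_{K_F}(v'))) > (δ - φ_{K_X}(ṽ))/(δ - (φ_{K_X}(ṽ) - φ_{K_F}(ṽ))),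 contradicting maximality of L. Hence x_k < 1 for all k ≤ ℓ. -/
open scoped BigOperators Classical

noncomputable section

/-- the claim in the classification of `δ`-lct's: let
`σ = Cone(v₁,…,v_m)` be simplicial with primitive generators, `W ⊆ N_ℂ`, with
`{v₁,…,v_s} ∩ W = {v₁,…,v_ℓ}`, and `φ_{K_X}, φ_{K_F}` linear with `φ_{K_X}(v_i) = 1`,
`φ_{K_F}(v_i) = 1` for `i ≤ ℓ` and `0` otherwise.  Suppose the maximum `L > 0` of the
ratios `(δ-φ_{K_X}(v))/(δ-(φ_{K_X}(v)-φ_{K_F}(v)))` over `S` is achieved at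
`ṽ = x₁v₁ + ⋯ + x_s v_s ∈ S` with all `x_i > 0`.  Then (subtracting `v_k` would strictly
increase the ratio, contradicting maximality) `x_k < 1` for all `k ≤ ℓ`. -/
theorem stmt18 {n m : ℕ} (gens : Fin m → V n)
    (hindep : LinearIndependent ℝ gens) (hprim : ∀ j, IsPrimVec (gens j))
    (W : Submodule ℂ (Fin n → ℂ))
    (s ℓ : ℕ) (hs : s ≤ m) (hℓ : ℓ ≤ s)
    (hmem : ∀ j : Fin m, (j : ℕ) < s → (toC (gens j) ∈ W ↔ (j : ℕ) < ℓ))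
    (φX φF : V n →ₗ[ℝ] ℝ)
    (hφX : ∀ j, φX (gens j) = 1)
    (hφF : ∀ j, φF (gens j) = if toC (gens j) ∈ W then 1 else 0)
    (δ : ℝ) (hδ : 0 < δ)
    (x : Fin m → ℝ) (hx : ∀ j : Fin m, (j : ℕ) < s → 0 < x j)
    (vt : V n) (hvt : vt = ∑ j ∈ Finset.univ.filter (fun j : Fin m => (j : ℕ) < s),
      x j • gens j)
    (hvtS : IsPrimVec vt ∧ vt ∈ coneSpan (Set.range gens) ∧ toC vt ∉ W ∧ φX vt < δ)
    (L : ℝ) (hL : L = (δ - φX vt) / (δ - (φX vt - φF vt))) (hLpos : 0 < L)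
    (hmax : ∀ v : V n, IsIntVec v → v ∈ coneSpan (Set.range gens) → toC v ∉ W →
      φX v < δ → (δ - φX v) / (δ - (φX v - φF v)) ≤ L) :
    ∀ k : Fin m, (k : ℕ) < ℓ → x k < 1 := by

  intro k hk
  by_contra h
  push_neg at h
  have hks : (k : ℕ) < s := lt_of_lt_of_le hk hℓ
  have hkW : toC (gens k) ∈ W := (hmem k hks).2 hk
  obtain ⟨hprimvt, hcone, hWvt, hφXlt⟩ := hvtS
  set v' := vt - gens k with hv'
  -- v' is an integer vector
  have hint : IsIntVec v' := by
    obtain ⟨w, hw, -⟩ := hprimvt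
    obtain ⟨u, hu, -⟩ := hprim k
    intro i
    refine ⟨w i - u i, ?_⟩
    simp [hv', hw, hu, Pi.sub_apply]
  -- v' lies in the cone
  have hcone' : v' ∈ coneSpan (Set.range gens) := by
    refine ⟨m, fun j => if (j : ℕ) < s then (if j = k then x j - 1 else x j) else 0,
      gens, ?_, fun i => ⟨i, rfl⟩, ?_⟩
    · intro i
      dsimp only
      split_ifs with h1 h2
      · subst h2; linarith
      · linarith [hx i h1]
      · exact le_refl 0
    · have hvt' : vt = ∑ j : Fin m, (if (j : ℕ) < s then x j else 0) • gens j := by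
        rw [hvt, Finset.sum_filter]
        refine Finset.sum_congr rfl fun j _ => ?_
        split_ifs <;> simp
      have hgk : gens k = ∑ j : Fin m, (if j = k then (1:ℝ) else 0) • gens j := by
        simp [ite_smul]
      simp only []
      rw [hv', hvt', hgk, ← Finset.sum_sub_distrib]
      refine Finset.sum_congr rfl fun j _ => ?_
      by_cases hjk : j = k
      · subst hjk
        simp [hks, sub_smul]
      · by_cases hjs : (j : ℕ) < s <;> simp [hjk, hjs]
  -- v' not in W
  have htoC : toC v' = toC vt - toC (gens k) := by
    funext i
    simp [toC, hv', Pi.sub_apply]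
  have hW' : toC v' ∉ W := by
    intro hmemW
    apply hWvt
    have : toC vt = toC v' + toC (gens k) := by rw [htoC]; ring
    rw [this]
    exact W.add_mem hmemW hkW
  -- φ values
  have hvX' : φX v' = φX vt - 1 := by rw [hv', map_sub, hφX]
  have hvF' : φF v' = φF vt - 1 := by rw [hv', map_sub, hφF, if_pos hkW]
  have hN : 0 < δ - φX vt := by linarith
  have hD : 0 < δ - (φX vt - φF vt) := by
    by_contra hD
    push_neg at hD
    rcases lt_or_eq_of_le hD with hD | hD
    · have : (δ - φX vt) / (δ - (φX vt - φF vt)) < 0 := div_neg_of_pos_of_neg hN hD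
      linarith [hL ▸ this]
    · rw [hL, hD, div_zero] at hLpos; linarith
  have key := hmax v' hint hcone' hW' (by rw [hvX']; linarith)
  rw [hvX', hvF', hL] at key
  have e : δ - (φX vt - 1 - (φF vt - 1)) = δ - (φX vt - φF vt) := by ring
  rw [e, div_le_div_iff₀ hD hD] at key
  nlinarith
end
end
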